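/- arXiv:2405.19353 — 9 statements merged into one kernel-verified Lean document; each statement's English description precedes it below -/
import Mathlib

section
/- Let v_{j,i} = V_j R^i u_{θ_j} (j = 1,…,4, i = 0,1,2) be the 12-point configurations of Theorem (isoclinicMercedes), where R is the rotation of ℝ² by 2π/3, u_θ = (cos θ, sin θ), and V₁,…,V₄ ∈ ℝ^{4×2} are given by [V₁,V₂,V₃,V₄] = (1/√6)·[[√6,0,√2,0,√2,0,√2,0],[0,√6,0,√2,0,√2,0,√2],[0,0,-2,0,1,-√3,1,√3],[0,0,0,-2,√3,1,-√3,1]]. Then: (i) for all θ₁,…,θ₄ ∈ ℝ and all indices with j ≠ k, |⟨v_{j,i}, v_{k,i'}⟩| ≤ 1/√3; and (ii) for every s ∈ [0, 1/√3] there exist θ₁,…,θ₄ ∈ ℝ, indices j ≠ k and i, i' ∈ {0,1,2} such that |⟨v_{j,i}, v_{k,i'}⟩| = s. Hence the cross-plane angle |⟨v_j,v_k⟩| can take any value in the interval [0, 1/√3]. -/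
open Real Matrix

/-- The rotation of `ℝ²` by angle `2π/3`. -/
noncomputable def R : Matrix (Fin 2) (Fin 2) ℝ :=
  !![-1/2, -Real.sqrt 3 / 2; Real.sqrt 3 / 2, -1/2]

/-- The four `4×2` matrices `V₁,V₂,V₃,V₄` whose columns are orthonormal and span
four equi-isoclinic planes in `ℝ⁴`. -/
noncomputable def V : Fin 4 → Matrix (Fin 4) (Fin 2) ℝ :=
  ![(1 / Real.sqrt 6) • !![Real.sqrt 6, 0; 0, Real.sqrt 6; 0, 0; 0, 0],
    (1 / Real.sqrt 6) • !![Real.sqrt 2, 0; 0, Real.sqrt 2; -2, 0; 0, -2],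
    (1 / Real.sqrt 6) • !![Real.sqrt 2, 0; 0, Real.sqrt 2; 1, -Real.sqrt 3; Real.sqrt 3, 1],
    (1 / Real.sqrt 6) • !![Real.sqrt 2, 0; 0, Real.sqrt 2; 1, Real.sqrt 3; -Real.sqrt 3, 1]]

/-- The unit vector `u_θ = (cos θ, sin θ)` in `ℝ²`. -/
noncomputable def u (θ : ℝ) : Fin 2 → ℝ := ![Real.cos θ, Real.sin θ]

/-- The twelve vectors `v_{j,i} = V_j R^i u_{θ_j}` of four Mercedes-Benz frames lying
on the four equi-isoclinic planes. -/
noncomputable def v (θ : Fin 4 → ℝ) (j : Fin 4) (i : Fin 3) : Fin 4 → ℝ :=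
  (V j).mulVec ((R ^ (i : ℕ)).mulVec (u (θ j)))

/-!
For `j ≠ k` the planes of `V j` and `V k` are isoclinic with cosine `1/√3`: `(V j)ᵀ * V k` is
`1/√3` times an orthogonal matrix. Since `R` is a rotation, `⟨v_{j,i}, v_{k,i'}⟩ = ⟨a, (V j)ᵀ V k b⟩`
with unit vectors `a, b`, and Cauchy–Schwarz bounds it by `1/√3`. Moreover `(V 0)ᵀ * V 1 = I/√3`,
so `⟨v_{0,0}, v_{1,0}⟩ = cos (θ 0 - θ 1) / √3`, which sweeps out `[0, 1/√3]`.
-/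

namespace Matrix

variable {m n : Type*} [Fintype m] [Fintype n]

theorem dotProduct_mulVec_mulVec_of_transpose_mul_self {α : Type*} [CommSemiring α]
    [DecidableEq n] {A : Matrix m n α} {c : α} (hA : Aᵀ * A = c • 1) (x y : n → α) :
    A *ᵥ x ⬝ᵥ A *ᵥ y = c * (x ⬝ᵥ y) := by
  rw [dotProduct_mulVec, ← mulVec_transpose, mulVec_mulVec, hA, smul_mulVec, one_mulVec,
    smul_dotProduct, smul_eq_mul]

theorem dotProduct_sq_le_dotProduct_self_mul (x y : n → ℝ) :
    (x ⬝ᵥ y) ^ 2 ≤ (x ⬝ᵥ x) * (y ⬝ᵥ y) := by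
  simpa only [dotProduct, sq] using Finset.sum_mul_sq_le_sq_mul_sq Finset.univ x y

theorem abs_dotProduct_mulVec_le_sqrt [DecidableEq n] {G : Matrix m n ℝ} {c : ℝ}
    (hG : Gᵀ * G = c • 1) {a : m → ℝ} {b : n → ℝ} (ha : a ⬝ᵥ a = 1) (hb : b ⬝ᵥ b = 1) :
    |a ⬝ᵥ G *ᵥ b| ≤ √c := by
  refine Real.abs_le_sqrt ?_
  calc (a ⬝ᵥ G *ᵥ b) ^ 2 ≤ (a ⬝ᵥ a) * (G *ᵥ b ⬝ᵥ G *ᵥ b) :=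
        dotProduct_sq_le_dotProduct_self_mul _ _
    _ = c := by rw [ha, dotProduct_mulVec_mulVec_of_transpose_mul_self hG, hb, one_mul, mul_one]

end Matrix

theorem u_dotProduct_u (a b : ℝ) : u a ⬝ᵥ u b = cos (a - b) := by
  simp [u, dotProduct, Fin.sum_univ_two, cos_sub]

theorem R_mem_orthogonalGroup : R ∈ orthogonalGroup (Fin 2) ℝ := by
  have h3 : √3 * √3 = 3 := mul_self_sqrt (by norm_num)
  rw [mem_orthogonalGroup_iff']
  ext i j
  fin_cases i <;> fin_cases j <;> simp [R, mul_apply, Fin.sum_univ_two] <;> linarith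

theorem R_pow_mulVec_u_dotProduct_self (i : ℕ) (θ : ℝ) :
    R ^ i *ᵥ u θ ⬝ᵥ R ^ i *ᵥ u θ = 1 := by
  have hR : (R ^ i)ᵀ * R ^ i = (1 : ℝ) • 1 := by
    simpa using (mem_orthogonalGroup_iff' (Fin 2) ℝ).1 (pow_mem R_mem_orthogonalGroup i)
  rw [dotProduct_mulVec_mulVec_of_transpose_mul_self hR, u_dotProduct_u, sub_self, cos_zero,
    one_mul]

theorem sum_v_mul_v_eq_dotProduct (θ : Fin 4 → ℝ) (j k : Fin 4) (i i' : Fin 3) :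
    ∑ l, v θ j i l * v θ k i' l =
      R ^ (i : ℕ) *ᵥ u (θ j) ⬝ᵥ ((V j)ᵀ * V k) *ᵥ (R ^ (i' : ℕ) *ᵥ u (θ k)) := by
  rw [← mulVec_mulVec, dotProduct_mulVec, vecMul_transpose]
  rfl

theorem V_transpose_mul_V_isoclinic {j k : Fin 4} (h : j ≠ k) :
    ((V j)ᵀ * V k)ᵀ * ((V j)ᵀ * V k) = (3 : ℝ)⁻¹ • 1 := by
  have h2 : √2 * √2 = 2 := mul_self_sqrt (by norm_num)
  have h3 : √3 * √3 = 3 := mul_self_sqrt (by norm_num)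
  have h6 : √6 = √2 * √3 := by rw [← sqrt_mul (by norm_num)]; norm_num
  fin_cases j <;> fin_cases k <;> (try exact absurd rfl h) <;>
    ext a b <;> fin_cases a <;> fin_cases b <;>
    simp [V, mul_apply, Fin.sum_univ_four, Fin.sum_univ_two] <;>
    field_simp <;> rw [h6] <;> grind

theorem V_zero_transpose_mul_V_one : (V 0)ᵀ * V 1 = (√3)⁻¹ • 1 := by
  have h6 : √6 = √2 * √3 := by rw [← sqrt_mul (by norm_num)]; norm_num
  have h2 : (0 : ℝ) < √2 := by positivity
  ext a b
  fin_cases a <;> fin_cases b <;> simp [V, mul_apply, Fin.sum_univ_four] <;>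
    rw [h6] <;> field_simp

theorem sum_v_zero_mul_v_one (θ : Fin 4 → ℝ) :
    ∑ l, v θ 0 0 l * v θ 1 0 l = (√3)⁻¹ * cos (θ 0 - θ 1) := by
  rw [sum_v_mul_v_eq_dotProduct, V_zero_transpose_mul_V_one, smul_mulVec, one_mulVec,
    Fin.val_zero, pow_zero, one_mulVec, one_mulVec, dotProduct_smul, u_dotProduct_u, smul_eq_mul]

/-- For the `12`-point spherical `(2,2)`-designs `v_{j,i} = V_j R^i u_{θ_j}` for `ℝ⁴`, the
cross-plane angle `|⟨v_{j,i}, v_{k,i'}⟩|` (`j ≠ k`) is at most `1/√3`, and it takes every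
value in the interval `[0, 1/√3]` over all choices of `θ₁,…,θ₄` and of indices. -/
theorem crossplane_angles :
    (∀ θ : Fin 4 → ℝ, ∀ j k : Fin 4, j ≠ k → ∀ i i' : Fin 3,
      |∑ l, v θ j i l * v θ k i' l| ≤ 1 / Real.sqrt 3) ∧
    (∀ s ∈ Set.Icc (0 : ℝ) (1 / Real.sqrt 3),
      ∃ θ : Fin 4 → ℝ, ∃ j k : Fin 4, j ≠ k ∧ ∃ i i' : Fin 3,
        |∑ l, v θ j i l * v θ k i' l| = s) := by
  refine ⟨fun θ j k hjk i i' => ?_, fun s ⟨hs0, hs1⟩ => ?_⟩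
  · rw [sum_v_mul_v_eq_dotProduct, one_div, ← sqrt_inv]
    exact abs_dotProduct_mulVec_le_sqrt (V_transpose_mul_V_isoclinic hjk)
      (R_pow_mulVec_u_dotProduct_self _ _) (R_pow_mulVec_u_dotProduct_self _ _)
  · have h3 : (0 : ℝ) < √3 := by positivity
    have hc0 : 0 ≤ √3 * s := by positivity
    have hc1 : √3 * s ≤ 1 := by rwa [le_div_iff₀' h3] at hs1
    refine ⟨![arccos (√3 * s), 0, 0, 0], 0, 1, by decide, 0, 0, ?_⟩
    rw [sum_v_zero_mul_v_one]
    simp [cos_arccos (by linarith) hc1, abs_of_nonneg hs0, h3.ne']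
end

section
/- The following polynomial identity holds in ℝ[x,y,z] (Reznick's formula): 540·(x² + y² + z²)³ = 378x⁶ + 378y⁶ + 280z⁶ + (√3·x + 2z)⁶ + (√3·x − 2z)⁶ + (√3·y + 2z)⁶ + (√3·y − 2z)⁶ + (√3·x + √3·y + z)⁶ + (√3·x − √3·y + z)⁶ + (√3·x + √3·y − z)⁶ + (√3·x − √3·y − z)⁶. -/
/-!
Apart from `x`, `y`, `z`, the linear forms come in pairs `a ± b` with `b` free of `√3`, and
`(a + b)⁶ + (a - b)⁶` is a polynomial in `a²` and `b²`. Since `a²` is `3` times a square, `√3`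
disappears and what remains is an identity of integer polynomials; so the formula holds in any
commutative ring with a square root of `3`.
-/

theorem add_pow_six_add_sub_pow_six {R : Type*} [CommRing R] (a b : R) :
    (a + b) ^ 6 + (a - b) ^ 6 =
      2 * ((a ^ 2) ^ 3 + 15 * (a ^ 2) ^ 2 * b ^ 2 + 15 * a ^ 2 * (b ^ 2) ^ 2 + (b ^ 2) ^ 3) := by
  ring

theorem reznick_identity_of_sq_eq_three {R : Type*} [CommRing R] {s : R} (hs : s ^ 2 = 3)
    (x y z : R) :
    540 * (x ^ 2 + y ^ 2 + z ^ 2) ^ 3 =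
      378 * x ^ 6 + 378 * y ^ 6 + 280 * z ^ 6 +
      (s * x + 2 * z) ^ 6 + (s * x - 2 * z) ^ 6 +
      (s * y + 2 * z) ^ 6 + (s * y - 2 * z) ^ 6 +
      (s * x + s * y + z) ^ 6 + (s * x - s * y + z) ^ 6 +
      (s * x + s * y - z) ^ 6 + (s * x - s * y - z) ^ 6 := by
  have sq_smul (t : R) : (s * t) ^ 2 = 3 * t ^ 2 := by rw [mul_pow, hs]
  have pair_x := add_pow_six_add_sub_pow_six (s * x) (2 * z)
  have pair_y := add_pow_six_add_sub_pow_six (s * y) (2 * z)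
  have pair_add := add_pow_six_add_sub_pow_six (s * (x + y)) z
  have pair_sub := add_pow_six_add_sub_pow_six (s * (x - y)) z
  simp only [sq_smul] at pair_x pair_y pair_add pair_sub
  linear_combination -pair_x - pair_y - pair_add - pair_sub

/-- Reznick's formula: the ternary sextic identity
`540(x²+y²+z²)³ = 378x⁶ + 378y⁶ + 280z⁶ + (√3x+2z)⁶ + (√3x−2z)⁶ + (√3y+2z)⁶ + (√3y−2z)⁶
 + (√3x+√3y+z)⁶ + (√3x−√3y+z)⁶ + (√3x+√3y−z)⁶ + (√3x−√3y−z)⁶`. -/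
theorem reznick_formula (x y z : ℝ) :
    540 * (x ^ 2 + y ^ 2 + z ^ 2) ^ 3 =
      378 * x ^ 6 + 378 * y ^ 6 + 280 * z ^ 6 +
      (Real.sqrt 3 * x + 2 * z) ^ 6 + (Real.sqrt 3 * x - 2 * z) ^ 6 +
      (Real.sqrt 3 * y + 2 * z) ^ 6 + (Real.sqrt 3 * y - 2 * z) ^ 6 +
      (Real.sqrt 3 * x + Real.sqrt 3 * y + z) ^ 6 +
      (Real.sqrt 3 * x - Real.sqrt 3 * y + z) ^ 6 +
      (Real.sqrt 3 * x + Real.sqrt 3 * y - z) ^ 6 +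
      (Real.sqrt 3 * x - Real.sqrt 3 * y - z) ^ 6 :=
  reznick_identity_of_sq_eq_three (Real.sq_sqrt (by norm_num)) x y z
end

section
/- Define α_j = (12960 + (−1)^j·864·√105)^{1/6} and β_j = (−1)^j·(1425 − (−1)^j·139·√105)^{1/6} for j = 0, 1 (all quantities under the sixth roots are positive), and let c_k = cos(2πk/5), s_k = sin(2πk/5) for k = 0,…,4. Then the following identity holds for all x, y, z ∈ ℝ: Σ_{j=0}^{1} Σ_{k=0}^{4} (α_j(c_k x + s_k y) + β_j z)⁶ + 26250·z⁶ = 40500·(x² + y² + z²)³. -/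
/-!
With `ζ = exp (2πi/5)` and `w = x + iy`, the linear forms are `c_k x + s_k y = (ζᵏ w̄ + ζ⁻ᵏ w) / 2`,
and orthogonality of the fifth roots of unity kills every monomial `w̄ʲ wᵐ⁻ʲ` with `5 ∤ 2j - m`.
So for one weight pair `(a, b)` the pentagon sum `∑ₖ (a (c_k x + s_k y) + b z)⁶` is a combination of
the `D₅`-invariants `z⁶, z⁴|w|², z²|w|⁴, |w|⁶, z Re w⁵` with coefficients `b⁶, a²b⁴, a⁴b², a⁶, a⁵b`.
The identity thus reduces to five moment equations for `(α_j, β_j)`; the mixed moments are settled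
by comparing sixth powers, each `α_jⁱ β_j⁶⁻ⁱ` being an explicit element of `ℚ(√105)` or `1728 √5`.
-/

open Finset Complex ComplexConjugate

namespace IsPrimitiveRoot

variable {K : Type*} [Field K] {ζ : K} {n : ℕ}

theorem geom_sum_zpow (hζ : IsPrimitiveRoot ζ n) (e : ℤ) :
    ∑ k ∈ range n, (ζ ^ e) ^ k = if (n : ℤ) ∣ e then (n : K) else 0 := by
  split_ifs with h
  · simp [(hζ.zpow_eq_one_iff_dvd e).2 h]
  · have hne : ζ ^ e ≠ 1 := mt (hζ.zpow_eq_one_iff_dvd e).1 h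
    have hpow : (ζ ^ e) ^ n = 1 := by
      rw [← zpow_natCast, ← zpow_mul, mul_comm, zpow_mul, hζ.zpow_eq_one, one_zpow]
    rw [geom_sum_eq hne, hpow, sub_self, zero_div]

theorem sum_add_inv_mul_pow (hζ : IsPrimitiveRoot ζ n) (u v : K) (m : ℕ) :
    ∑ k ∈ range n, (ζ ^ k * u + (ζ ^ k)⁻¹ * v) ^ m =
      n * ∑ j ∈ (range (m + 1)).filter (fun j : ℕ => (n : ℤ) ∣ 2 * j - m),
        u ^ j * v ^ (m - j) * m.choose j := by
  rcases n.eq_zero_or_pos with rfl | hn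
  · simp
  have hζ0 : ζ ≠ 0 := hζ.ne_zero hn.ne'
  have hterm : ∀ k j, j ≤ m → (ζ ^ k * u) ^ j * ((ζ ^ k)⁻¹ * v) ^ (m - j) =
      (ζ ^ (2 * j - m : ℤ)) ^ k * (u ^ j * v ^ (m - j)) := by
    intro k j hj
    have he : (2 * j - m : ℤ) = j - (m - j : ℕ) := by push_cast [hj]; ring
    rw [he, zpow_sub₀ hζ0, zpow_natCast, zpow_natCast, div_pow, ← pow_mul, ← pow_mul,
      mul_comm j, mul_comm (m - j), pow_mul, pow_mul, mul_pow, mul_pow, inv_pow]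
    field_simp
  calc ∑ k ∈ range n, (ζ ^ k * u + (ζ ^ k)⁻¹ * v) ^ m
      = ∑ j ∈ range (m + 1), (∑ k ∈ range n, (ζ ^ (2 * j - m : ℤ)) ^ k) *
          (u ^ j * v ^ (m - j) * m.choose j) := by
        simp_rw [add_pow, sum_mul]
        rw [sum_comm]
        refine sum_congr rfl fun j hj => sum_congr rfl fun k _ => ?_
        rw [hterm k j (Nat.lt_succ_iff.1 (mem_range.1 hj))]
        ring
    _ = n * ∑ j ∈ (range (m + 1)).filter (fun j : ℕ => (n : ℤ) ∣ 2 * j - m),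
          u ^ j * v ^ (m - j) * m.choose j := by
        simp_rw [hζ.geom_sum_zpow, ite_mul, zero_mul, sum_ite, sum_const_zero, add_zero, mul_sum]

end IsPrimitiveRoot

theorem sum_mul_add_pow {R ι : Type*} [CommSemiring R] (s : Finset ι) (f : ι → R) (a c : R)
    (N : ℕ) : ∑ i ∈ s, (a * f i + c) ^ N =
      ∑ m ∈ range (N + 1), a ^ m * c ^ (N - m) * N.choose m * ∑ i ∈ s, f i ^ m := by
  simp_rw [add_pow, mul_sum]
  rw [sum_comm]
  refine sum_congr rfl fun m _ => sum_congr rfl fun i _ => ?_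
  ring

theorem Complex.ofReal_cos_mul_add_sin_mul (θ x y : ℝ) :
    (Real.cos θ : ℂ) * x + (Real.sin θ : ℂ) * y =
      (exp (θ * I) * conj (x + y * I) + (exp (θ * I))⁻¹ * (x + y * I)) / 2 := by
  rw [← exp_neg, ← neg_mul, exp_mul_I, exp_mul_I, cos_neg, sin_neg, ← ofReal_cos, ← ofReal_sin]
  simp only [map_add, map_mul, conj_ofReal, conj_I]
  linear_combination ((Real.sin θ : ℂ) * y) * I_sq

theorem sum_pentagon_mul_add_pow_six (a b x y z : ℝ) :
    ∑ k ∈ range 5, (a * (Real.cos (2 * Real.pi * k / 5) * x +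
        Real.sin (2 * Real.pi * k / 5) * y) + b * z) ^ 6 =
      b ^ 6 * (5 * z ^ 6) + a ^ 2 * b ^ 4 * (75 / 2 * z ^ 4 * (x ^ 2 + y ^ 2)) +
        a ^ 4 * b ^ 2 * (225 / 8 * z ^ 2 * (x ^ 2 + y ^ 2) ^ 2) +
        a ^ 6 * (25 / 16 * (x ^ 2 + y ^ 2) ^ 3) +
        a ^ 5 * b * (15 / 8 * z * ((x + y * I) ^ 5).re) := by
  set v : ℂ := x + y * I
  set ζ : ℂ := exp (2 * Real.pi * I / 5)
  have hζ : IsPrimitiveRoot ζ 5 := isPrimitiveRoot_exp 5 (by norm_num)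
  have hdir : ∀ k : ℕ, (Real.cos (2 * Real.pi * k / 5) : ℂ) * x +
      (Real.sin (2 * Real.pi * k / 5) : ℂ) * y = 2⁻¹ * (ζ ^ k * conj v + (ζ ^ k)⁻¹ * v) := by
    intro k
    have hk : exp (↑(2 * Real.pi * k / 5) * I) = ζ ^ k := by
      rw [← exp_nat_mul]; congr 1; push_cast; ring
    rw [ofReal_cos_mul_add_sin_mul, hk, div_eq_inv_mul]
  have hnorm : (x : ℂ) ^ 2 + (y : ℂ) ^ 2 = conj v * v := by
    rw [← ofReal_pow, ← ofReal_pow, ← ofReal_add, ← normSq_add_mul_I, normSq_eq_conj_mul_self]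
  have hre : ((v ^ 5).re : ℂ) = (conj v ^ 5 + v ^ 5) / 2 := by
    rw [re_eq_add_conj, map_pow, add_comm]
  apply ofReal_injective
  simp only [ofReal_sum, ofReal_pow, ofReal_add, ofReal_mul, ofReal_div, ofReal_ofNat, hdir,
    hnorm, hre, sum_mul_add_pow]
  simp only [mul_pow, ← mul_sum, hζ.sum_add_inv_mul_pow]
  norm_num [sum_range_succ, sum_filter, Nat.choose]
  ring

theorem pentagon_design_identity_of_moments {ι : Type*} [Fintype ι] (a b : ι → ℝ)
    (h6 : ∑ i, a i ^ 6 = 25920) (h4 : ∑ i, a i ^ 4 * b i ^ 2 = 4320)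
    (h2 : ∑ i, a i ^ 2 * b i ^ 4 = 3240) (h0 : ∑ i, b i ^ 6 = 2850)
    (h5 : ∑ i, a i ^ 5 * b i = 0) (x y z : ℝ) :
    ∑ i, ∑ k : Fin 5, (a i * (Real.cos (2 * Real.pi * (k : ℕ) / 5) * x +
        Real.sin (2 * Real.pi * (k : ℕ) / 5) * y) + b i * z) ^ 6 + 26250 * z ^ 6 =
      40500 * (x ^ 2 + y ^ 2 + z ^ 2) ^ 3 := by
  have hpentagon : ∀ i, ∑ k : Fin 5, (a i * (Real.cos (2 * Real.pi * (k : ℕ) / 5) * x +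
      Real.sin (2 * Real.pi * (k : ℕ) / 5) * y) + b i * z) ^ 6 = _ := fun i =>
    (Fin.sum_univ_eq_sum_range (fun k => (a i * (Real.cos (2 * Real.pi * k / 5) * x +
      Real.sin (2 * Real.pi * k / 5) * y) + b i * z) ^ 6) 5).trans
      (sum_pentagon_mul_add_pow_six (a i) (b i) x y z)
  simp only [hpentagon, sum_add_distrib, ← sum_mul, h6, h4, h2, h0, h5]
  ring

theorem Real.rpow_pow_eq_self {p r : ℝ} {n : ℕ} (hp : 0 ≤ p) (hr : r * n = 1) :
    (p ^ r) ^ n = p := by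
  rw [← rpow_natCast, ← rpow_mul hp, hr, rpow_one]

theorem Real.rpow_pow_mul_rpow_pow_eq {p q r t : ℝ} {n i j : ℕ} (hn : n ≠ 0) (hr : r * n = 1)
    (hp : 0 ≤ p) (hq : 0 ≤ q) (ht : 0 ≤ t) (h : p ^ i * q ^ j = t ^ n) :
    (p ^ r) ^ i * (q ^ r) ^ j = t := by
  refine (pow_left_inj₀ (by positivity) ht hn).1 ?_
  rw [mul_pow, ← pow_mul, ← pow_mul, mul_comm i, mul_comm j, pow_mul, pow_mul,
    rpow_pow_eq_self hp hr, rpow_pow_eq_self hq hr, h]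

noncomputable def designAlpha (j : Fin 2) : ℝ :=
  ((12960 : ℝ) + (-1 : ℝ) ^ (j : ℕ) * 864 * Real.sqrt 105) ^ ((1 : ℝ) / 6)

noncomputable def designBeta (j : Fin 2) : ℝ :=
  (-1 : ℝ) ^ (j : ℕ) * ((1425 : ℝ) - (-1 : ℝ) ^ (j : ℕ) * 139 * Real.sqrt 105) ^ ((1 : ℝ) / 6)

theorem designAlpha_zero : designAlpha 0 = (12960 + 864 * √105) ^ ((1 : ℝ) / 6) := by
  simp [designAlpha]

theorem designAlpha_one : designAlpha 1 = (12960 - 864 * √105) ^ ((1 : ℝ) / 6) := by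
  simp [designAlpha, sub_eq_add_neg]

theorem designBeta_zero : designBeta 0 = (1425 - 139 * √105) ^ ((1 : ℝ) / 6) := by
  simp [designBeta]

theorem designBeta_one : designBeta 1 = -(1425 + 139 * √105) ^ ((1 : ℝ) / 6) := by
  simp [designBeta]

theorem sqrt_105_sq : √105 ^ 2 = 105 := Real.sq_sqrt (by norm_num)

theorem sqrt_105_lt : √105 < 41 / 4 := (Real.sqrt_lt' (by norm_num)).2 (by norm_num)

theorem sum_designAlpha_pow_six : ∑ j, designAlpha j ^ 6 = 25920 := by
  have hS₀ := Real.sqrt_nonneg 105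
  have hS_lt := sqrt_105_lt
  rw [Fin.sum_univ_two, designAlpha_zero, designAlpha_one,
    Real.rpow_pow_eq_self (by linarith) (by norm_num),
    Real.rpow_pow_eq_self (by linarith) (by norm_num)]
  ring

theorem sum_designBeta_pow_six : ∑ j, designBeta j ^ 6 = 2850 := by
  have hS₀ := Real.sqrt_nonneg 105
  have hS_lt := sqrt_105_lt
  rw [Fin.sum_univ_two, designBeta_zero, designBeta_one, Even.neg_pow (by decide),
    Real.rpow_pow_eq_self (by linarith) (by norm_num),
    Real.rpow_pow_eq_self (by linarith) (by norm_num)]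
  ring

theorem sum_designAlpha_pow_four_mul_designBeta_sq :
    ∑ j, designAlpha j ^ 4 * designBeta j ^ 2 = 4320 := by
  have hS₀ := Real.sqrt_nonneg 105
  have hS_lt := sqrt_105_lt
  have hS_sq := sqrt_105_sq
  rw [Fin.sum_univ_two, designAlpha_zero, designAlpha_one, designBeta_zero, designBeta_one, neg_sq,
    Real.rpow_pow_mul_rpow_pow_eq (n := 6) (t := 2160 - 144 * √105) (by norm_num) (by norm_num)
      (by linarith) (by linarith) (by linarith) (by grind),
    Real.rpow_pow_mul_rpow_pow_eq (n := 6) (t := 2160 + 144 * √105) (by norm_num) (by norm_num)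
      (by linarith) (by linarith) (by linarith) (by grind)]
  ring

theorem sum_designAlpha_sq_mul_designBeta_pow_four :
    ∑ j, designAlpha j ^ 2 * designBeta j ^ 4 = 3240 := by
  have hS₀ := Real.sqrt_nonneg 105
  have hS_lt := sqrt_105_lt
  have hS_sq := sqrt_105_sq
  rw [Fin.sum_univ_two, designAlpha_zero, designAlpha_one, designBeta_zero, designBeta_one,
    Even.neg_pow (by decide),
    Real.rpow_pow_mul_rpow_pow_eq (n := 6) (t := 1620 - 156 * √105) (by norm_num) (by norm_num)
      (by linarith) (by linarith) (by linarith) (by grind),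
    Real.rpow_pow_mul_rpow_pow_eq (n := 6) (t := 1620 + 156 * √105) (by norm_num) (by norm_num)
      (by linarith) (by linarith) (by linarith) (by grind)]
  ring

theorem sum_designAlpha_pow_five_mul_designBeta : ∑ j, designAlpha j ^ 5 * designBeta j = 0 := by
  have hS₀ := Real.sqrt_nonneg 105
  have hS_lt := sqrt_105_lt
  have hS_sq := sqrt_105_sq
  have h5_sq := Real.sq_sqrt (show (0 : ℝ) ≤ 5 by norm_num)
  rw [Fin.sum_univ_two, designAlpha_zero, designAlpha_one, designBeta_zero, designBeta_one,
    ← pow_one ((1425 - 139 * √105) ^ ((1 : ℝ) / 6)),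
    ← pow_one ((1425 + 139 * √105) ^ ((1 : ℝ) / 6)), mul_neg,
    Real.rpow_pow_mul_rpow_pow_eq (n := 6) (t := 1728 * √5) (by norm_num) (by norm_num)
      (by linarith) (by linarith) (by positivity) (by grind),
    Real.rpow_pow_mul_rpow_pow_eq (n := 6) (t := 1728 * √5) (by norm_num) (by norm_num)
      (by linarith) (by linarith) (by positivity) (by grind)]
  ring

/-- The new `11`-point weighted spherical `(3,3)`-design for `ℝ³` with dihedral symmetry
`D₅`, as a sum-of-sixth-powers identity:  with
`α_j = (12960 + (−1)ʲ·864√105)^{1/6}`, `β_j = (−1)ʲ·(1425 − (−1)ʲ·139√105)^{1/6}`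
(`j = 0,1`) and `c_k = cos(2πk/5)`, `s_k = sin(2πk/5)` (`k = 0,…,4`), one has
`Σ_j Σ_k (α_j(c_k x + s_k y) + β_j z)⁶ + 26250 z⁶ = 40500 (x²+y²+z²)³`. -/
theorem new_eleven_point_design_identity (x y z : ℝ) :
    (∑ j : Fin 2, ∑ k : Fin 5,
        (((12960 : ℝ) + (-1 : ℝ) ^ (j : ℕ) * 864 * Real.sqrt 105) ^ ((1 : ℝ)/6) *
            (Real.cos (2 * Real.pi * (k : ℕ) / 5) * x +
             Real.sin (2 * Real.pi * (k : ℕ) / 5) * y) +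
          (-1 : ℝ) ^ (j : ℕ) *
            ((1425 : ℝ) - (-1 : ℝ) ^ (j : ℕ) * 139 * Real.sqrt 105) ^ ((1 : ℝ)/6) * z) ^ 6)
      + 26250 * z ^ 6
      = 40500 * (x ^ 2 + y ^ 2 + z ^ 2) ^ 3 :=
  pentagon_design_identity_of_moments designAlpha designBeta sum_designAlpha_pow_six
    sum_designAlpha_pow_four_mul_designBeta_sq sum_designAlpha_sq_mul_designBeta_pow_four
    sum_designBeta_pow_six sum_designAlpha_pow_five_mul_designBeta x y z
end

section
/- Let a₁, a₂, b₁, b₂, b₃ be real numbers and let v₁,…,v₁₁ ∈ ℝ³ be given by v_{k+1} = (a₁ cos(2πk/5), a₁ sin(2πk/5), b₁) and v_{k+6} = (a₂ cos(2πk/5), a₂ sin(2πk/5), −b₂) for k = 0,…,4, and v₁₁ = (0, 0, −b₃). If (v_j) is a weighted spherical (3,3)-design for ℝ³ (equivalently, there is a constant C with Σ_{j=1}^{11} ⟨x, v_j⟩⁶ = C‖x‖⁶ for all x ∈ ℝ³), then 5b₁⁶ + 5b₂⁶ + b₃⁶ = (25/16)(a₁⁶ + a₂⁶) and a₁⁶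 + a₂⁶ = 6(a₁⁴b₁² + a₂⁴b₂²) = 8(a₁²b₁⁴ + a₂²b₂⁴). -/
/-!
Restrict the design identity to the vectors `x = (c, 0, s)`. The moments
`∑ₖ cos (2πk/5) ^ m` of the regular pentagon are `5, 0, 5/2, 0, 15/8, 5/16, 25/16` for
`m = 0, …, 6`, so `∑ⱼ ⟨x, vⱼ⟩⁶` becomes an explicit binary sextic in `c, s` whose
`c⁶, c⁴s², c²s⁴, s⁶` coefficients are `25/16 (a₁⁶ + a₂⁶)`, `225/8 (a₁⁴b₁² + a₂⁴b₂²)`,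
`75/2 (a₁²b₁⁴ + a₂²b₂⁴)` and `5b₁⁶ + 5b₂⁶ + b₃⁶`. Comparing with `C (c² + s²)³` makes these
`C, 3C, 3C, C`, and eliminating `C` gives the three relations.
-/

open Real

theorem cos_two_pi_div_five : cos (2 * π / 5) = (√5 - 1) / 4 := by
  rw [show 2 * π / 5 = 2 * (π / 5) by ring, cos_two_mul, cos_pi_div_five]
  linear_combination (1 / 8) * sq_sqrt (show (0 : ℝ) ≤ 5 by norm_num)

theorem cos_four_pi_div_five : cos (4 * π / 5) = -(1 + √5) / 4 := by
  rw [show 4 * π / 5 = 2 * (2 * π / 5) by ring, cos_two_mul, cos_two_pi_div_five]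
  linear_combination (1 / 8) * sq_sqrt (show (0 : ℝ) ≤ 5 by norm_num)

theorem sum_pow_six_cos_pentagon (p q : ℝ) :
    ∑ k : Fin 5, (p * cos (2 * π * (k : ℕ) / 5) + q) ^ 6 =
      25 / 16 * p ^ 6 + 15 / 8 * p ^ 5 * q + 225 / 8 * p ^ 4 * q ^ 2 +
        75 / 2 * p ^ 2 * q ^ 4 + 5 * q ^ 6 := by
  have h₂ : cos (2 * π * 2 / 5) = cos (4 * π / 5) := by ring_nf
  have h₃ : cos (2 * π * 3 / 5) = cos (4 * π / 5) := by
    rw [← cos_two_pi_sub]; ring_nf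
  have h₄ : cos (2 * π * 4 / 5) = cos (2 * π / 5) := by
    rw [← cos_two_pi_sub]; ring_nf
  simp only [Fin.sum_univ_five, Fin.isValue, Fin.coe_ofNat_eq_mod, Nat.zero_mod,
    CharP.cast_eq_zero, mul_zero, zero_div, cos_zero, mul_one, Nat.one_mod, Nat.cast_one,
    Nat.reduceMod, Nat.cast_ofNat, Nat.mod_succ, h₂, h₃, h₄, cos_two_pi_div_five,
    cos_four_pi_div_five]
  have hs : √5 ^ 2 = 5 := sq_sqrt (by norm_num)
  have hs₄ : √5 ^ 4 = 5 ^ 2 := by linear_combination (√5 ^ 2 + 5) * hs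
  have hs₆ : √5 ^ 6 = 5 ^ 3 := by linear_combination (√5 ^ 4 + 5 * √5 ^ 2 + 25) * hs
  -- `√5 ↦ -√5` swaps the two cosine values, so only even powers of `√5` survive
  ring_nf
  simp only [hs, hs₄, hs₆]
  ring

theorem sum_pow_six_inner_xz (a₁ a₂ b₁ b₂ b₃ : ℝ)
    (v : Fin (5 + 5 + 1) → Fin 3 → ℝ)
    (hv₁ : ∀ k : Fin 5, v ⟨k, by omega⟩ = ![a₁ * cos (2 * π * (k : ℕ) / 5),
      a₁ * sin (2 * π * (k : ℕ) / 5), b₁])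
    (hv₂ : ∀ k : Fin 5, v ⟨k + 5, by omega⟩ = ![a₂ * cos (2 * π * (k : ℕ) / 5),
      a₂ * sin (2 * π * (k : ℕ) / 5), -b₂])
    (hv₃ : v (Fin.last _) = ![0, 0, -b₃]) (c s : ℝ) :
    ∑ j, (∑ i, ![c, 0, s] i * v j i) ^ 6 =
      25 / 16 * (a₁ ^ 6 + a₂ ^ 6) * c ^ 6 + 15 / 8 * (a₁ ^ 5 * b₁ - a₂ ^ 5 * b₂) * c ^ 5 * s +
        225 / 8 * (a₁ ^ 4 * b₁ ^ 2 + a₂ ^ 4 * b₂ ^ 2) * c ^ 4 * s ^ 2 +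
        75 / 2 * (a₁ ^ 2 * b₁ ^ 4 + a₂ ^ 2 * b₂ ^ 4) * c ^ 2 * s ^ 4 +
        (5 * b₁ ^ 6 + 5 * b₂ ^ 6 + b₃ ^ 6) * s ^ 6 := by
  rw [Fin.sum_univ_castSucc, Fin.sum_univ_add]
  have e₁ : ∀ k : Fin 5, v (Fin.castAdd 5 k).castSucc = v ⟨k, by omega⟩ := fun _ => rfl
  have e₂ : ∀ k : Fin 5, v (Fin.natAdd 5 k).castSucc = v ⟨k + 5, by omega⟩ :=
    fun k => congrArg v (Fin.ext (Nat.add_comm 5 k))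
  simp only [e₁, e₂, hv₁, hv₂, hv₃, Fin.sum_univ_three]
  simp only [Fin.isValue, Matrix.cons_val_zero, Matrix.cons_val_one, Matrix.cons_val, ← mul_assoc,
    zero_mul, mul_zero, add_zero, zero_add, mul_neg]
  rw [sum_pow_six_cos_pentagon, sum_pow_six_cos_pentagon]
  ring

theorem coeffs_eq_of_forall_eq_mul_sq_add_sq_pow_three {α₆ α₅ α₄ α₂ α₀ C : ℝ}
    (h : ∀ c s : ℝ, α₆ * c ^ 6 + α₅ * c ^ 5 * s + α₄ * c ^ 4 * s ^ 2 + α₂ * c ^ 2 * s ^ 4 +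
      α₀ * s ^ 6 = C * (c ^ 2 + s ^ 2) ^ 3) :
    α₆ = C ∧ α₅ = 0 ∧ α₄ = 3 * C ∧ α₂ = 3 * C ∧ α₀ = C := by
  refine ⟨?_, ?_, ?_, ?_, ?_⟩ <;>
    linarith [h 1 0, h 0 1, h 1 1, h 1 (-1), h 2 1, h 2 (-1)]

/-- Necessary conditions for the `D₅`-symmetric configuration of two lifted sets of five
equally spaced lines plus one axis vector to be a weighted spherical `(3,3)`-design for
`ℝ³`:  if `Σ_j ⟨x, v_j⟩⁶ = C‖x‖⁶` for all `x ∈ ℝ³`, then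
`5b₁⁶ + 5b₂⁶ + b₃⁶ = (25/16)(a₁⁶ + a₂⁶)` and
`a₁⁶ + a₂⁶ = 6(a₁⁴b₁² + a₂⁴b₂²) = 8(a₁²b₁⁴ + a₂²b₂⁴)`. -/
theorem new_design_necessary_conditions (a₁ a₂ b₁ b₂ b₃ : ℝ)
    (v : Fin 11 → Fin 3 → ℝ)
    (hv₁ : ∀ k : Fin 5, v ⟨(k : ℕ), by omega⟩ =
      ![a₁ * Real.cos (2 * Real.pi * (k : ℕ) / 5),
        a₁ * Real.sin (2 * Real.pi * (k : ℕ) / 5), b₁])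
    (hv₂ : ∀ k : Fin 5, v ⟨(k : ℕ) + 5, by omega⟩ =
      ![a₂ * Real.cos (2 * Real.pi * (k : ℕ) / 5),
        a₂ * Real.sin (2 * Real.pi * (k : ℕ) / 5), -b₂])
    (hv₃ : v ⟨10, by omega⟩ = ![0, 0, -b₃])
    (C : ℝ)
    (hdesign : ∀ x : Fin 3 → ℝ,
      ∑ j : Fin 11, (∑ i, x i * v j i) ^ 6 = C * (∑ i, x i ^ 2) ^ 3) :
    5 * b₁ ^ 6 + 5 * b₂ ^ 6 + b₃ ^ 6 = 25/16 * (a₁ ^ 6 + a₂ ^ 6) ∧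
    a₁ ^ 6 + a₂ ^ 6 = 6 * (a₁ ^ 4 * b₁ ^ 2 + a₂ ^ 4 * b₂ ^ 2) ∧
    a₁ ^ 6 + a₂ ^ 6 = 8 * (a₁ ^ 2 * b₁ ^ 4 + a₂ ^ 2 * b₂ ^ 4) := by
  obtain ⟨h₆, -, h₄, h₂, h₀⟩ := coeffs_eq_of_forall_eq_mul_sq_add_sq_pow_three fun c s =>
    (sum_pow_six_inner_xz a₁ a₂ b₁ b₂ b₃ v hv₁ hv₂ hv₃ c s).symm.trans
      (by simpa [Fin.sum_univ_three] using hdesign ![c, 0, s])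
  refine ⟨?_, ?_, ?_⟩
  · linear_combination h₀ - h₆
  · linear_combination (16 / 25) * h₆ - (16 / 75) * h₄
  · linear_combination (16 / 25) * h₆ - (16 / 75) * h₂
end

section
/- The following polynomial identity holds in ℝ[x₁,x₂,x₃,x₄] (Kempner's identity): 120·(x₁² + x₂² + x₃² + x₄²)³ = Σ_{i=1}^{4} (2x_i)⁶ + 8·Σ_{1≤i<j≤4} ((x_i + x_j)⁶ + (x_i − x_j)⁶) + Σ_{(ε₂,ε₃,ε₄)∈{±1}³} (x₁ + ε₂x₂ + ε₃x₃ + ε₄x₄)⁶. -/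
open Real Finset

theorem Finset.sum_neg_one_one {M : Type*} [AddCommMonoid M] (f : ℝ → M) :
    ∑ ε ∈ ({-1, 1} : Finset ℝ), f ε = f (-1) + f 1 :=
  Finset.sum_pair (by norm_num)

theorem Fin.sum_sum_ite_lt_four {M : Type*} [AddCommMonoid M] (f : Fin 4 → Fin 4 → M) :
    (∑ i, ∑ j, if i < j then f i j else 0) =
      f 0 1 + f 0 2 + f 0 3 + f 1 2 + f 1 3 + f 2 3 := by
  simp only [Fin.sum_univ_four]
  simp +decide only [ite_true, ite_false, add_zero, zero_add]
  abel

/-- Kempner's identity: the quaternary sextic identity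
`120(x₁²+x₂²+x₃²+x₄²)³ = Σᵢ(2xᵢ)⁶ + 8Σ_{i<j}((xᵢ+xⱼ)⁶ + (xᵢ−xⱼ)⁶)
 + Σ_{(ε₂,ε₃,ε₄)∈{±1}³}(x₁ + ε₂x₂ + ε₃x₃ + ε₄x₄)⁶`. -/
theorem kempner_identity (x : Fin 4 → ℝ) :
    120 * (∑ i, x i ^ 2) ^ 3 =
      (∑ i, (2 * x i) ^ 6) +
      8 * (∑ i, ∑ j, if i < j then (x i + x j) ^ 6 + (x i - x j) ^ 6 else 0) +
      (∑ ε ∈ ({-1, 1} : Finset ℝ) ×ˢ ({-1, 1} : Finset ℝ) ×ˢ ({-1, 1} : Finset ℝ),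
        (x 0 + ε.1 * x 1 + ε.2.1 * x 2 + ε.2.2 * x 3) ^ 6) := by
  rw [Fin.sum_sum_ite_lt_four]
  simp only [Fin.sum_univ_four, Finset.sum_product, Finset.sum_neg_one_one]
  ring
end

section
/- Let t ≥ 1, d ≥ 1, let v₁,…,vₙ ∈ ℝ^d be not all zero, and suppose there is a constant C ∈ ℝ such that C·‖x‖^{2t} = Σ_{j=1}^{n} ⟨x, v_j⟩^{2t} for all x ∈ ℝ^d. Then C = c_t(ℝ^d)·Σ_{j=1}^{n} ‖v_j‖^{2t}, where c_t(ℝ^d) = ∏_{j=0}^{t-1} (2j+1)/(d+2j), and consequently (v_j) is a spherical (t,t)-design for ℝ^d, i.e. Σ_{j=1}^n Σ_{k=1}^n ⟨v_j,v_k⟩^{2t} = c_t(ℝ^d)·(Σ_{ℓ=1}^n ‖v_ℓ‖^{2t})². -/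
/-!
Integrate the identity `C ‖x‖^{2t} = Σⱼ ⟨x, vⱼ⟩^{2t}` against the Gaussian weight `exp (-‖x‖²)`.
Polar coordinates give `∫ ‖x‖^{2t} e^{-‖x‖²} = Γ(d/2 + t)/Γ(d/2) · ∫ e^{-‖x‖²}`; a reflection taking
`vⱼ` to `‖vⱼ‖ e₀` together with Fubini gives
`∫ ⟨x, vⱼ⟩^{2t} e^{-‖x‖²} = ‖vⱼ‖^{2t} Γ(1/2 + t)/Γ(1/2) · ∫ e^{-‖x‖²}`. The ratio of the two Gamma
quotients is `c_t(ℝᵈ)`, and evaluating the identity at `x = vₖ` and summing gives the design equation.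
-/

open Real Finset MeasureTheory

theorem Real.Gamma_add_nat_eq_prod_mul {x : ℝ} (hx : 0 < x) (m : ℕ) :
    Gamma (x + m) = (∏ j ∈ range m, (x + j)) * Gamma x := by
  induction m with
  | zero => simp
  | succ k ih =>
    rw [Nat.cast_succ, ← add_assoc, Gamma_add_one (by positivity), ih, prod_range_succ]
    ring

theorem pow_smul_pow_mul_exp_neg_sq (k m : ℕ) (y : ℝ) :
    y ^ k • (y ^ (2 * m) * exp (-y ^ 2)) = y ^ ((k + 2 * m : ℕ) : ℝ) * exp (-y ^ (2 : ℝ)) := by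
  rw [rpow_natCast, rpow_two, smul_eq_mul, pow_add, mul_assoc]

section Radial

variable {E : Type*} [NormedAddCommGroup E] [NormedSpace ℝ E] [FiniteDimensional ℝ E]
  [Nontrivial E] [MeasurableSpace E] [BorelSpace E] (μ : Measure E) [μ.IsAddHaarMeasure]

theorem integral_norm_pow_mul_exp_neg_sq_eq_Gamma (m : ℕ) :
    ∫ x, ‖x‖ ^ (2 * m) * exp (-‖x‖ ^ 2) ∂μ =
      Module.finrank ℝ E * μ.real (Metric.ball 0 1) *
        (Gamma (Module.finrank ℝ E / 2 + m) / 2) := by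
  have hd := Module.finrank_pos (R := ℝ) (M := E)
  rw [integral_fun_norm_addHaar μ (fun r ↦ r ^ (2 * m) * exp (-r ^ 2)), nsmul_eq_mul, smul_eq_mul,
    setIntegral_congr_fun measurableSet_Ioi fun y _ ↦ pow_smul_pow_mul_exp_neg_sq _ m y,
    integral_rpow_mul_exp_neg_rpow two_pos (neg_one_lt_zero.trans_le (Nat.cast_nonneg _))]
  have hexp : (((Module.finrank ℝ E - 1 + 2 * m : ℕ) : ℝ) + 1) / 2 =
      Module.finrank ℝ E / 2 + m := by
    push_cast [Nat.cast_sub hd]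
    ring
  rw [hexp]
  ring

theorem integral_norm_pow_mul_exp_neg_sq (m : ℕ) :
    ∫ x, ‖x‖ ^ (2 * m) * exp (-‖x‖ ^ 2) ∂μ =
      (∏ j ∈ range m, (Module.finrank ℝ E / 2 + j : ℝ)) * ∫ x, exp (-‖x‖ ^ 2) ∂μ := by
  have hd := Module.finrank_pos (R := ℝ) (M := E)
  have h0 := integral_norm_pow_mul_exp_neg_sq_eq_Gamma μ 0
  simp only [mul_zero, pow_zero, one_mul, Nat.cast_zero, add_zero] at h0
  rw [integral_norm_pow_mul_exp_neg_sq_eq_Gamma, h0, Gamma_add_nat_eq_prod_mul (by positivity)]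
  ring

theorem integrable_norm_pow_mul_exp_neg_sq (m : ℕ) :
    Integrable (fun x ↦ ‖x‖ ^ (2 * m) * exp (-‖x‖ ^ 2)) μ := by
  rw [integrable_fun_norm_addHaar μ (f := fun r ↦ r ^ (2 * m) * exp (-r ^ 2))]
  exact (integrableOn_rpow_mul_exp_neg_rpow (neg_one_lt_zero.trans_le (Nat.cast_nonneg _))
    two_pos).congr_fun (fun y _ ↦ (pow_smul_pow_mul_exp_neg_sq _ m y).symm) measurableSet_Ioi

theorem integral_exp_neg_norm_sq_pos : 0 < ∫ x, exp (-‖x‖ ^ 2) ∂μ :=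
  integral_exp_pos (by simpa using integrable_norm_pow_mul_exp_neg_sq μ 0)

end Radial

theorem integral_sq_pow_mul_exp_neg_sq (m : ℕ) :
    ∫ s : ℝ, s ^ (2 * m) * exp (-s ^ 2) =
      (∏ j ∈ range m, (1 / 2 + j : ℝ)) * ∫ s : ℝ, exp (-s ^ 2) := by
  simpa [pow_mul, sq_abs] using integral_norm_pow_mul_exp_neg_sq (volume : Measure ℝ) m

section InnerProductSpace

variable {E : Type*} [NormedAddCommGroup E] [InnerProductSpace ℝ E] [FiniteDimensional ℝ E]
  [MeasurableSpace E] [BorelSpace E]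

theorem integrable_inner_pow_mul_exp_neg_sq [Nontrivial E] (μ : Measure E) [μ.IsAddHaarMeasure]
    (u : E) (m : ℕ) : Integrable (fun x ↦ inner ℝ x u ^ (2 * m) * exp (-‖x‖ ^ 2)) μ := by
  refine ((integrable_norm_pow_mul_exp_neg_sq μ m).const_mul (‖u‖ ^ (2 * m))).mono'
    (by fun_prop) (.of_forall fun x ↦ ?_)
  rw [norm_mul, norm_pow, norm_of_nonneg (exp_pos _).le, ← mul_assoc, ← mul_pow, mul_comm ‖u‖]
  gcongr
  exact abs_real_inner_le_norm x u

theorem integral_comp_inner_norm_eq_of_norm_eq {G : Type*} [NormedAddCommGroup G]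
    [NormedSpace ℝ G] {u w : E} (h : ‖u‖ = ‖w‖) (F : ℝ → ℝ → G) :
    ∫ x, F (inner ℝ x u) ‖x‖ = ∫ x, F (inner ℝ x w) ‖x‖ := by
  set R := (ℝ ∙ (u - w))ᗮ.reflection
  have hRu : R u = w := Submodule.reflection_sub h
  symm
  rw [← R.measurePreserving.integral_comp R.toHomeomorph.measurableEmbedding]
  congr 1 with x
  rw [← hRu, LinearIsometryEquiv.inner_map_map, LinearIsometryEquiv.norm_map]

end InnerProductSpace

namespace EuclideanSpace

variable {d : ℕ}

theorem integral_comp_inner_norm (i : Fin d) (u : EuclideanSpace ℝ (Fin d))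
    {G : Type*} [NormedAddCommGroup G] [NormedSpace ℝ G] (F : ℝ → ℝ → G) :
    ∫ x : EuclideanSpace ℝ (Fin d), F (inner ℝ x u) ‖x‖ =
      ∫ x : EuclideanSpace ℝ (Fin d), F (‖u‖ * x i) ‖x‖ := by
  rw [integral_comp_inner_norm_eq_of_norm_eq (w := ‖u‖ • EuclideanSpace.single i 1)
    (by rw [norm_smul, PiLp.norm_single, norm_one, mul_one, norm_norm])]
  simp [inner_smul_right, EuclideanSpace.inner_single_right]

theorem integral_comp_coord_mul_exp_neg_norm_sq (i : Fin d) (f : ℝ → ℝ) :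
    ∫ x : EuclideanSpace ℝ (Fin d), f (x i) * exp (-‖x‖ ^ 2) =
      (∫ s, f s * exp (-s ^ 2)) * (∫ s, exp (-s ^ 2)) ^ (d - 1) := by
  rw [← (EuclideanSpace.volume_preserving_symm_measurableEquiv_toLp (Fin d)).symm.integral_comp']
  have hprod : ∀ y : Fin d → ℝ,
      f (WithLp.toLp 2 y i) * exp (-‖WithLp.toLp 2 y‖ ^ 2) =
        ∏ k, (if k = i then f (y k) else 1) * exp (-y k ^ 2) := by
    intro y
    rw [prod_mul_distrib, prod_ite_eq' univ i, EuclideanSpace.norm_eq, sq_sqrt (by positivity),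
      ← exp_sum, ← sum_neg_distrib]
    simp
  have hrest : ∀ k ∈ univ.erase i,
      ∫ s, (if k = i then f s else 1) * exp (-s ^ 2) = ∫ s, exp (-s ^ 2) := by
    intro k hk
    simp [ne_of_mem_erase hk]
  simp only [MeasurableEquiv.symm_symm, MeasurableEquiv.toLp_apply, hprod]
  rw [volume_pi,
    integral_fintype_prod_eq_prod (f := fun k s ↦ (if k = i then f s else 1) * exp (-s ^ 2)),
    ← mul_prod_erase univ _ (mem_univ i), prod_congr rfl hrest, prod_const,
    card_erase_of_mem (mem_univ i), card_univ, Fintype.card_fin]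
  simp only [↓reduceIte]

theorem integral_coord_pow_mul_exp_neg_norm_sq (i : Fin d) (m : ℕ) :
    ∫ x : EuclideanSpace ℝ (Fin d), x i ^ (2 * m) * exp (-‖x‖ ^ 2) =
      (∏ j ∈ range m, (1 / 2 + j : ℝ)) * ∫ x : EuclideanSpace ℝ (Fin d), exp (-‖x‖ ^ 2) := by
  have h0 := integral_comp_coord_mul_exp_neg_norm_sq i fun _ ↦ 1
  simp only [one_mul] at h0
  rw [integral_comp_coord_mul_exp_neg_norm_sq i (· ^ (2 * m)), h0, integral_sq_pow_mul_exp_neg_sq]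
  ring

theorem integral_inner_pow_mul_exp_neg_norm_sq [NeZero d] (u : EuclideanSpace ℝ (Fin d))
    (m : ℕ) :
    ∫ x : EuclideanSpace ℝ (Fin d), inner ℝ x u ^ (2 * m) * exp (-‖x‖ ^ 2) =
      ‖u‖ ^ (2 * m) * (∏ j ∈ range m, (1 / 2 + j : ℝ)) *
        ∫ x : EuclideanSpace ℝ (Fin d), exp (-‖x‖ ^ 2) := by
  simp_rw [integral_comp_inner_norm 0 u fun a r ↦ a ^ (2 * m) * exp (-r ^ 2), mul_pow, mul_assoc,
    integral_const_mul, integral_coord_pow_mul_exp_neg_norm_sq]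

end EuclideanSpace

theorem prod_odd_div_eq_prod_half_div (d t : ℕ) :
    ∏ j ∈ range t, (2 * (j : ℝ) + 1) / ((d : ℝ) + 2 * j) =
      (∏ j ∈ range t, (1 / 2 + j : ℝ)) / ∏ j ∈ range t, ((d : ℝ) / 2 + j) := by
  rw [← prod_div_distrib]
  refine prod_congr rfl fun j _ ↦ ?_
  rw [← div_div_div_cancel_right₀ two_ne_zero]
  ring_nf

theorem sum_of_powers_gives_design_general (t d n : ℕ) (hd : 1 ≤ d)
    (v : Fin n → EuclideanSpace ℝ (Fin d)) (C : ℝ)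
    (hC : ∀ x : EuclideanSpace ℝ (Fin d),
      C * ‖x‖ ^ (2 * t) = ∑ j, (inner ℝ x (v j) : ℝ) ^ (2 * t)) :
    C = (∏ j ∈ Finset.range t, (2 * (j : ℝ) + 1) / ((d : ℝ) + 2 * j)) *
          ∑ j, ‖v j‖ ^ (2 * t) ∧
    ∑ j, ∑ k, (inner ℝ (v j) (v k) : ℝ) ^ (2 * t) =
      (∏ j ∈ Finset.range t, (2 * (j : ℝ) + 1) / ((d : ℝ) + 2 * j)) *
        (∑ l, ‖v l‖ ^ (2 * t)) ^ 2 := by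
  have : NeZero d := ⟨by omega⟩
  set G := ∫ x : EuclideanSpace ℝ (Fin d), exp (-‖x‖ ^ 2) with hG
  have hmoments : C * (∏ j ∈ range t, ((d : ℝ) / 2 + j)) * G =
      (∑ j, ‖v j‖ ^ (2 * t)) * (∏ j ∈ range t, (1 / 2 + j : ℝ)) * G := by
    calc C * (∏ j ∈ range t, ((d : ℝ) / 2 + j)) * G
        = ∫ x : EuclideanSpace ℝ (Fin d), C * ‖x‖ ^ (2 * t) * exp (-‖x‖ ^ 2) := by
          simp_rw [mul_assoc, integral_const_mul, integral_norm_pow_mul_exp_neg_sq,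
            finrank_euclideanSpace_fin, ← hG]
      _ = ∑ j, ∫ x : EuclideanSpace ℝ (Fin d), inner ℝ x (v j) ^ (2 * t) * exp (-‖x‖ ^ 2) := by
          simp_rw [hC, sum_mul]
          exact integral_finsetSum _ fun j _ ↦ integrable_inner_pow_mul_exp_neg_sq _ (v j) t
      _ = _ := by
          simp_rw [EuclideanSpace.integral_inner_pow_mul_exp_neg_norm_sq, ← hG, sum_mul]
  have hprod : ∏ j ∈ range t, ((d : ℝ) / 2 + j) ≠ 0 :=
    prod_ne_zero_iff.mpr fun j _ ↦ by positivity
  have hC_eq : C = (∏ j ∈ range t, (2 * (j : ℝ) + 1) / ((d : ℝ) + 2 * j)) *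
      ∑ j, ‖v j‖ ^ (2 * t) := by
    rw [prod_odd_div_eq_prod_half_div, eq_comm, div_mul_eq_mul_div, div_eq_iff hprod]
    linear_combination (mul_right_cancel₀ (integral_exp_neg_norm_sq_pos _).ne' hmoments).symm
  refine ⟨hC_eq, ?_⟩
  simp_rw [← hC, ← mul_sum, hC_eq]
  ring

/-- If `C‖x‖^{2t} = Σⱼ⟨x,vⱼ⟩^{2t}` for all `x ∈ ℝᵈ` (with the `vⱼ` not all zero), then
`C = c_t(ℝᵈ)·Σⱼ‖vⱼ‖^{2t}` with `c_t(ℝᵈ) = Π_{j=0}^{t-1}(2j+1)/(d+2j)`, and consequently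
`(vⱼ)` is a spherical `(t,t)`-design for `ℝᵈ`:
`ΣⱼΣ_k⟨vⱼ,v_k⟩^{2t} = c_t(ℝᵈ)·(Σ_ℓ‖v_ℓ‖^{2t})²`. -/
theorem sum_of_powers_gives_design (t d n : ℕ) (ht : 1 ≤ t) (hd : 1 ≤ d)
    (v : Fin n → EuclideanSpace ℝ (Fin d)) (hv : ∃ j, v j ≠ 0) (C : ℝ)
    (hC : ∀ x : EuclideanSpace ℝ (Fin d),
      C * ‖x‖ ^ (2 * t) = ∑ j, (inner ℝ x (v j) : ℝ) ^ (2 * t)) :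
    C = (∏ j ∈ Finset.range t, (2 * (j : ℝ) + 1) / ((d : ℝ) + 2 * j)) *
          ∑ j, ‖v j‖ ^ (2 * t) ∧
    ∑ j, ∑ k, (inner ℝ (v j) (v k) : ℝ) ^ (2 * t) =
      (∏ j ∈ Finset.range t, (2 * (j : ℝ) + 1) / ((d : ℝ) + 2 * j)) *
        (∑ l, ‖v l‖ ^ (2 * t)) ^ 2 :=
  sum_of_powers_gives_design_general t d n hd v C hC
end

section
/- Let t ≥ 1 and let v_k = (cos(kπ/(t+1)), sin(kπ/(t+1))) ∈ ℝ² for k = 0, 1, …, t, so that v₀,…,v_t span t+1 equally spaced lines in ℝ². Then (v_k) is a spherical (t,t)-design for ℝ²: Σ_{j=0}^{t} Σ_{k=0}^{t} |⟨v_j,v_k⟩|^{2t} = c_t(ℝ²)·(t+1)², where c_t(ℝ²) = ∏_{j=0}^{t-1} (2j+1)/(2j+2) = binom(2t,t)/4^t. -/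
open Real Finset

/-!
The inner product of `v_j` and `v_k` is `cos (θ_j - θ_k)` with `θ_k = kπ/(t+1)`. Writing
`cos x ^ (2t) = 4⁻ᵗ ∑_m C(2t,m) e^{2i(m-t)x}` and summing over `k`, each frequency `m ≠ t` is
a sum of `(t+1)`-th roots of unity `≠ 1` (as `0 < |m - t| < t + 1`) and vanishes, so
`∑_k cos (θ - θ_k) ^ (2t) = (t+1) C(2t,t) / 4ᵗ` for every `θ`.
-/

theorem IsPrimitiveRoot.geom_sum_zpow_eq_zero {K : Type*} [Field K] {ζ : K} {N : ℕ}
    (hζ : IsPrimitiveRoot ζ N) {r : ℤ} (hr : ¬(N : ℤ) ∣ r) :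
    ∑ k ∈ range N, (ζ ^ r) ^ k = 0 := by
  have hne : ζ ^ r ≠ 1 := mt (hζ.zpow_eq_one_iff_dvd r).1 hr
  rw [geom_sum_eq hne, ← zpow_natCast, ← zpow_mul, mul_comm, zpow_mul, zpow_natCast,
    hζ.pow_eq_one, one_zpow, sub_self, zero_div]

namespace Complex

theorem cos_pow_eq_sum_exp (z : ℂ) (n : ℕ) :
    cos z ^ n = (∑ m ∈ range (n + 1), n.choose m * exp ((2 * m - n) * z * I)) / 2 ^ n := by
  rw [cos, div_pow, add_pow]
  congr 1
  refine sum_congr rfl fun m hm => ?_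
  rw [← exp_nat_mul, ← exp_nat_mul, ← exp_add, mul_comm,
    Nat.cast_sub (Nat.lt_succ_iff.mp (mem_range.mp hm))]
  ring_nf

theorem sum_range_exp_int_mul_eq_zero {N : ℕ} {r : ℤ} (hr : ¬(N : ℤ) ∣ r) (θ : ℂ) :
    ∑ k ∈ range N, exp (2 * r * (θ - k * π / N) * I) = 0 := by
  obtain rfl | hN := eq_or_ne N 0
  · simp
  have hζ := isPrimitiveRoot_exp N hN
  have hterm (k : ℕ) : exp (2 * r * (θ - k * π / N) * I) =
      exp (2 * r * θ * I) * (exp (2 * π * I / N) ^ (-r)) ^ k := by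
    rw [← exp_int_mul, ← exp_nat_mul, ← exp_add]
    push_cast
    ring_nf
  simp_rw [hterm, ← mul_sum, hζ.geom_sum_zpow_eq_zero (dvd_neg.not.2 hr), mul_zero]

theorem sum_range_cos_sub_pow {t N : ℕ} (htN : t < N) (θ : ℂ) :
    ∑ k ∈ range N, cos (θ - k * π / N) ^ (2 * t) = N * (2 * t).choose t / 4 ^ t := by
  have h4 : (2 : ℂ) ^ (2 * t) = 4 ^ t := by rw [pow_mul]; norm_num
  have hexp (m : ℕ) (z : ℂ) : exp ((2 * m - (2 * t : ℕ)) * z * I) =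
      exp (2 * ((m - t : ℤ) : ℂ) * z * I) := by push_cast; ring_nf
  simp_rw [cos_pow_eq_sum_exp, h4, hexp, ← sum_div, mul_comm ((Nat.choose _ _ : ℂ))]
  rw [sum_comm, sum_eq_single t]
  · simp
  · intro m hm hmt
    rw [← sum_mul, sum_range_exp_int_mul_eq_zero, zero_mul]
    intro hdvd
    have hmN := mem_range.mp hm
    have hlt : |(m : ℤ) - t| < N := by rw [abs_lt]; omega
    have := Int.eq_zero_of_abs_lt_dvd hdvd hlt
    omega
  · exact fun ht => absurd (mem_range.mpr (by omega)) ht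

end Complex

theorem Real.sum_range_cos_sub_pow {t N : ℕ} (htN : t < N) (θ : ℝ) :
    ∑ k ∈ range N, cos (θ - k * π / N) ^ (2 * t) = N * (2 * t).choose t / 4 ^ t := by
  apply Complex.ofReal_injective
  push_cast [Complex.ofReal_cos]
  exact Complex.sum_range_cos_sub_pow htN θ

theorem prod_range_odd_div_even_eq_choose_div (t : ℕ) :
    ∏ j ∈ range t, (2 * (j : ℝ) + 1) / (2 * j + 2) = (2 * t).choose t / 4 ^ t := by
  induction t with
  | zero => simp
  | succ n ih =>
    have h : ((n : ℝ) + 1) * (2 * (n + 1)).choose (n + 1) = 2 * (2 * n + 1) * (2 * n).choose n := by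
      exact_mod_cast Nat.succ_mul_centralBinom_succ n
    rw [prod_range_succ, ih]
    field_simp
    linear_combination (-2) * (4 : ℝ) ^ n * h

theorem equally_spaced_lines_design_general (t : ℕ)
    (v : Fin (t + 1) → Fin 2 → ℝ)
    (hv : ∀ k, v k = ![Real.cos ((k : ℕ) * Real.pi / (t + 1)),
                       Real.sin ((k : ℕ) * Real.pi / (t + 1))]) :
    ∑ j : Fin (t + 1), ∑ k : Fin (t + 1), |∑ i, v j i * v k i| ^ (2 * t) =
      (∏ j ∈ Finset.range t, (2 * (j : ℝ) + 1) / (2 * j + 2)) * ((t : ℝ) + 1) ^ 2 ∧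
    (∏ j ∈ Finset.range t, (2 * (j : ℝ) + 1) / (2 * j + 2)) =
      (Nat.choose (2 * t) t : ℝ) / 4 ^ t := by
  have hinner (j k : Fin (t + 1)) : |∑ i, v j i * v k i| ^ (2 * t) =
      cos ((j : ℕ) * π / (t + 1) - (k : ℕ) * π / (t + 1)) ^ (2 * t) := by
    rw [Fin.sum_univ_two, hv j, hv k, (even_two_mul t).pow_abs, cos_sub]
    simp
  refine ⟨?_, prod_range_odd_div_even_eq_choose_div t⟩
  calc ∑ j : Fin (t + 1), ∑ k : Fin (t + 1), |∑ i, v j i * v k i| ^ (2 * t)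
      = ∑ _j : Fin (t + 1), ((t : ℝ) + 1) * (2 * t).choose t / 4 ^ t := by
        refine sum_congr rfl fun j _ => ?_
        have := Real.sum_range_cos_sub_pow (Nat.lt_succ_self t) ((j : ℕ) * π / (t + 1))
        rw [← Fin.sum_univ_eq_sum_range, Nat.cast_succ] at this
        simpa only [hinner] using this
    _ = _ := by
        rw [sum_const, card_univ, Fintype.card_fin, prod_range_odd_div_even_eq_choose_div,
          nsmul_eq_mul]
        push_cast
        ring

/-- The `t+1` equally spaced lines in `ℝ²`, spanned by
`v_k = (cos(kπ/(t+1)), sin(kπ/(t+1)))`, form a spherical `(t,t)`-design for `ℝ²`: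
`Σ_j Σ_k |⟨v_j,v_k⟩|^{2t} = c_t(ℝ²)·(t+1)²`, where
`c_t(ℝ²) = Π_{j=0}^{t-1}(2j+1)/(2j+2) = C(2t,t)/4ᵗ`. -/
theorem equally_spaced_lines_design (t : ℕ) (ht : 1 ≤ t)
    (v : Fin (t + 1) → Fin 2 → ℝ)
    (hv : ∀ k, v k = ![Real.cos ((k : ℕ) * Real.pi / (t + 1)),
                       Real.sin ((k : ℕ) * Real.pi / (t + 1))]) :
    ∑ j : Fin (t + 1), ∑ k : Fin (t + 1), |∑ i, v j i * v k i| ^ (2 * t) =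
      (∏ j ∈ Finset.range t, (2 * (j : ℝ) + 1) / (2 * j + 2)) * ((t : ℝ) + 1) ^ 2 ∧
    (∏ j ∈ Finset.range t, (2 * (j : ℝ) + 1) / (2 * j + 2)) =
      (Nat.choose (2 * t) t : ℝ) / 4 ^ t :=
  equally_spaced_lines_design_general t v hv
end

section
/- Let t ≥ 1, d ≥ 1, and let v₁,…,vₙ ∈ ℝ^d be arbitrary vectors. Then Σ_{j=1}^{n} Σ_{k=1}^{n} ⟨v_j,v_k⟩^{2t} ≥ c_t(ℝ^d)·(Σ_{ℓ=1}^{n} ‖v_ℓ‖^{2t})², where c_t(ℝ^d) = ∏_{j=0}^{t-1} (2j+1)/(d+2j) = (1·3·5⋯(2t−1))/(d(d+2)⋯(d+2(t−1))). -/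
/-!
Let `g` be a standard Gaussian vector in `ℝ^d` and `B = 𝔼[g^{⊗2t}]` its moment tensor, and put
`A = Σ_j v_j^{⊗2t}`. Then `‖A‖² = Σ_{j,k} ⟨v_j, v_k⟩^{2t}`, `⟨A, B⟩ = Σ_j 𝔼⟨g, v_j⟩^{2t} =
(2t-1)!! Σ_j ‖v_j‖^{2t}` and `‖B‖² = ∏_{j<t} (2j+1)(d+2j)`, so Cauchy–Schwarz `⟨A, B⟩² ≤ ‖A‖² ‖B‖²`
is the bound. The two identities for `B` follow by induction on the order from Wick's recursion.
-/

open Finset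

namespace Welch

variable {ι : Type*}

lemma sum_pi_fin_succ [Fintype ι] {m : ℕ} (f : (Fin (m + 1) → ι) → ℝ) :
    ∑ β, f β = ∑ c, ∑ β : Fin m → ι, f (Fin.cons c β) := by
  rw [← (Fin.consEquiv fun _ => ι).sum_comp, Fintype.sum_prod_type]
  rfl

lemma sum_sq_sum_prod_eq_sum_sum_inner_pow [Fintype ι] {κ : Type*} [Fintype κ] (m : ℕ)
    (v : κ → EuclideanSpace ℝ ι) :
    ∑ α : Fin m → ι, (∑ j, ∏ i, v j (α i)) ^ 2 = ∑ j, ∑ k, inner ℝ (v j) (v k) ^ m := by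
  have hinner : ∀ j k, inner ℝ (v j) (v k) = ∑ c, v j c * v k c := fun j k => by
    simp [PiLp.inner_apply, mul_comm]
  simp only [sq, sum_mul_sum, ← prod_mul_distrib]
  rw [sum_comm]
  refine sum_congr rfl fun j _ => ?_
  rw [sum_comm]
  refine sum_congr rfl fun k _ => ?_
  rw [← Fintype.prod_sum fun (_ : Fin m) c => v j c * v k c, prod_const, card_univ,
    Fintype.card_fin, hinner]

/-- `𝔼[gⁿ]` for a standard Gaussian `g`: `(n - 1)!!` for even `n`, `0` for odd `n`. -/
noncomputable def gaussMoment : ℕ → ℝ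
  | 0 => 1
  | 1 => 0
  | n + 2 => (n + 1) * gaussMoment n

lemma gaussMoment_add_two (n : ℕ) : gaussMoment (n + 2) = (n + 1) * gaussMoment n := rfl

lemma gaussMoment_succ (n : ℕ) : gaussMoment (n + 1) = n * gaussMoment (n - 1) := by
  cases n with
  | zero => simp [gaussMoment]
  | succ k => rw [gaussMoment_add_two]; push_cast; rfl

variable [DecidableEq ι]

def count {m : ℕ} (β : Fin m → ι) : ι → ℕ := ∑ i, Pi.single (β i) 1

lemma count_apply {m : ℕ} (β : Fin m → ι) (c : ι) :
    count β c = ∑ i, if β i = c then 1 else 0 := by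
  simp only [count, Finset.sum_apply, Pi.single_apply, eq_comm]

lemma count_cons {m : ℕ} (c : ι) (β : Fin m → ι) :
    count (Fin.cons c β : Fin (m + 1) → ι) = Pi.single c 1 + count β := by
  simp only [count, Fin.sum_univ_succ, Fin.cons_zero, Fin.cons_succ]

lemma count_insertNth {m : ℕ} (i : Fin (m + 1)) (c : ι) (β : Fin m → ι) :
    count (i.insertNth c β) = Pi.single c 1 + count β := by
  simp only [count, Fin.sum_univ_succAbove _ i, Fin.insertNth_apply_same,
    Fin.insertNth_apply_succAbove]

lemma count_removeNth_of_eq {m : ℕ} {β : Fin (m + 1) → ι} {i : Fin (m + 1)} {c : ι}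
    (h : β i = c) : count (i.removeNth β) = count β - Pi.single c 1 := by
  rw [← Fin.insertNth_self_removeNth i β, h, count_insertNth, Fin.removeNth_insertNth,
    add_tsub_cancel_left]

variable [Fintype ι]

lemma sum_count {m : ℕ} (β : Fin m → ι) : ∑ c, count β c = m := by
  simp only [count, Finset.sum_apply]
  rw [sum_comm]
  simp [sum_pi_single']

/-- `𝔼[g_{β 0} ⋯ g_{β (m - 1)}]` for a standard Gaussian vector `g` in `ℝ^ι`: the coordinates
are independent, so it factors over the multiplicities of the indices. -/
noncomputable def gaussMomentTensor {m : ℕ} (β : Fin m → ι) : ℝ := ∏ c, gaussMoment (count β c)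

lemma prod_comp_eq_mul_prod_compl (f : ℕ → ℝ) {N N' : ι → ℕ} (c : ι)
    (h : ∀ c' ≠ c, N c' = N' c') :
    ∏ c', f (N c') = f (N c) * ∏ c' ∈ {c}ᶜ, f (N' c') := by
  rw [Fintype.prod_eq_mul_prod_compl c]
  congr 1
  exact prod_congr rfl fun c' hc' => by rw [h c' (by simpa using hc')]

/-- Gaussian integration by parts `𝔼[g_c X] = 𝔼[∂_c X]` (Wick's recursion) for monomials `X`. -/
lemma gaussMomentTensor_cons {m : ℕ} (c : ι) (β : Fin (m + 1) → ι) :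
    gaussMomentTensor (Fin.cons c β : Fin (m + 2) → ι) =
      ∑ i, if β i = c then gaussMomentTensor (i.removeNth β) else 0 := by
  have hcons : ∀ c' ≠ c, (Pi.single c 1 + count β : ι → ℕ) c' = count β c' :=
    fun c' hc' => by simp [hc']
  have hremove : ∀ c' ≠ c, (count β - Pi.single c 1 : ι → ℕ) c' = count β c' :=
    fun c' hc' => by simp [hc']
  have hterm : ∀ i, (if β i = c then gaussMomentTensor (i.removeNth β) else 0) =
      (if β i = c then 1 else 0) * ∏ c', gaussMoment ((count β - Pi.single c 1 : ι → ℕ) c') := by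
    intro i
    split_ifs with h
    · rw [one_mul, gaussMomentTensor, count_removeNth_of_eq h]
    · rw [zero_mul]
  have hcount : (∑ i, if β i = c then (1 : ℝ) else 0) = count β c := by
    simp [count_apply]
  rw [sum_congr rfl fun i _ => hterm i, ← sum_mul, hcount, gaussMomentTensor, count_cons,
    prod_comp_eq_mul_prod_compl _ c hcons, prod_comp_eq_mul_prod_compl _ c hremove]
  simp only [Pi.add_apply, Pi.sub_apply, Pi.single_eq_same, add_comm 1, gaussMoment_succ]
  ring

lemma gaussMomentTensor_cons_insertNth {m : ℕ} (i : Fin (m + 1)) (c : ι) (γ : Fin m → ι) :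
    gaussMomentTensor (Fin.cons c (i.insertNth c γ) : Fin (m + 2) → ι) =
      (count γ c + 1) * gaussMomentTensor γ := by
  have hoff : ∀ c' ≠ c, (Pi.single c 1 + (Pi.single c 1 + count γ) : ι → ℕ) c' = count γ c' :=
    fun c' hc' => by simp [hc']
  rw [gaussMomentTensor, gaussMomentTensor, count_cons, count_insertNth,
    prod_comp_eq_mul_prod_compl _ c hoff, prod_comp_eq_mul_prod_compl _ c fun _ _ => rfl]
  simp only [Pi.add_apply, Pi.single_eq_same, ← add_assoc, one_add_one_eq_two, add_comm 2,
    gaussMoment_add_two]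
  ring

lemma sum_sum_sum_ite_eq {m : ℕ} (K : ι → (Fin (m + 1) → ι) → Fin (m + 1) → ℝ) :
    ∑ c, ∑ β, ∑ i, (if β i = c then K c β i else 0) =
      ∑ i, ∑ c, ∑ γ : Fin m → ι, K c (i.insertNth c γ) i := by
  calc ∑ c, ∑ β, ∑ i, (if β i = c then K c β i else 0)
      = ∑ β, ∑ i, ∑ c, (if β i = c then K c β i else 0) := by
        rw [sum_comm]
        exact sum_congr rfl fun β _ => sum_comm
    _ = ∑ i, ∑ β, K (β i) β i := by
        simp only [sum_ite_eq, mem_univ, if_true]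
        exact sum_comm
    _ = ∑ i, ∑ c, ∑ γ : Fin m → ι, K c (i.insertNth c γ) i := by
        refine sum_congr rfl fun i _ => ?_
        rw [← (Fin.insertNthEquiv (fun _ => ι) i).sum_comp, Fintype.sum_prod_type]
        simp [Fin.insertNthEquiv]

lemma sum_gaussMomentTensor_mul_prod_add_two (m : ℕ) (x : ι → ℝ) :
    ∑ β : Fin (m + 2) → ι, gaussMomentTensor β * ∏ i, x (β i) =
      (m + 1) * (∑ c, x c ^ 2) * ∑ β : Fin m → ι, gaussMomentTensor β * ∏ i, x (β i) := by
  calc ∑ β : Fin (m + 2) → ι, gaussMomentTensor β * ∏ i, x (β i)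
      = ∑ c, ∑ β : Fin (m + 1) → ι, ∑ i,
          (if β i = c then gaussMomentTensor (i.removeNth β) * (x c * ∏ j, x (β j)) else 0) := by
        rw [sum_pi_fin_succ]
        refine sum_congr rfl fun c _ => sum_congr rfl fun β _ => ?_
        simp only [Fin.prod_univ_succ, Fin.cons_zero, Fin.cons_succ, gaussMomentTensor_cons,
          sum_mul, ite_mul, zero_mul]
    _ = ∑ _i : Fin (m + 1), ∑ c, ∑ γ : Fin m → ι,
          x c ^ 2 * (gaussMomentTensor γ * ∏ j, x (γ j)) := by
        rw [sum_sum_sum_ite_eq]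
        refine sum_congr rfl fun i _ => sum_congr rfl fun c _ =>
          sum_congr rfl fun γ _ => ?_
        rw [Fin.removeNth_insertNth, Fin.prod_univ_succAbove _ i]
        simp only [Fin.insertNth_apply_same, Fin.insertNth_apply_succAbove]
        ring
    _ = (m + 1) * (∑ c, x c ^ 2) * ∑ β : Fin m → ι, gaussMomentTensor β * ∏ i, x (β i) := by
        simp only [← mul_sum, ← sum_mul, sum_const, card_univ, Fintype.card_fin, nsmul_eq_mul,
          Nat.cast_add, Nat.cast_one]
        ring

lemma sum_gaussMomentTensor_sq_add_two (m : ℕ) :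
    ∑ β : Fin (m + 2) → ι, gaussMomentTensor β ^ 2 =
      (m + 1) * (Fintype.card ι + m) * ∑ β : Fin m → ι, gaussMomentTensor β ^ 2 := by
  calc ∑ β : Fin (m + 2) → ι, gaussMomentTensor β ^ 2
      = ∑ c, ∑ β : Fin (m + 1) → ι, ∑ i,
          (if β i = c then gaussMomentTensor (Fin.cons c β : Fin (m + 2) → ι) *
            gaussMomentTensor (i.removeNth β) else 0) := by
        rw [sum_pi_fin_succ]
        refine sum_congr rfl fun c _ => sum_congr rfl fun β _ => ?_
        rw [sq]
        nth_rw 2 [gaussMomentTensor_cons c β]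
        simp only [mul_sum, mul_ite, mul_zero]
    _ = ∑ _i : Fin (m + 1), ∑ γ : Fin m → ι, ∑ c,
          (count γ c + 1) * gaussMomentTensor γ ^ 2 := by
        rw [sum_sum_sum_ite_eq]
        refine sum_congr rfl fun i _ => ?_
        rw [sum_comm]
        simp only [Fin.removeNth_insertNth, gaussMomentTensor_cons_insertNth, sq, mul_assoc]
    _ = (m + 1) * (Fintype.card ι + m) * ∑ β : Fin m → ι, gaussMomentTensor β ^ 2 := by
        simp only [← sum_mul, sum_add_distrib, ← Nat.cast_sum, sum_count]
        simp only [sum_const, card_univ, nsmul_eq_mul, mul_one, ← mul_sum, Fintype.card_fin,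
          Nat.cast_add, Nat.cast_one]
        ring

lemma sum_gaussMomentTensor_mul_prod_two_mul (t : ℕ) (x : ι → ℝ) :
    ∑ β : Fin (2 * t) → ι, gaussMomentTensor β * ∏ i, x (β i) =
      (∏ j ∈ range t, (2 * (j : ℝ) + 1)) * (∑ c, x c ^ 2) ^ t := by
  induction t with
  | zero => simp [gaussMomentTensor, count, gaussMoment]
  | succ t ih =>
    rw [mul_add_one, sum_gaussMomentTensor_mul_prod_add_two, ih, prod_range_succ, pow_succ]
    push_cast
    ring

lemma sum_gaussMomentTensor_sq_two_mul (t : ℕ) :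
    ∑ β : Fin (2 * t) → ι, gaussMomentTensor β ^ 2 =
      ∏ j ∈ range t, (2 * (j : ℝ) + 1) * (Fintype.card ι + 2 * j) := by
  induction t with
  | zero => simp [gaussMomentTensor, count, gaussMoment]
  | succ t ih =>
    rw [mul_add_one, sum_gaussMomentTensor_sq_add_two, ih, prod_range_succ]
    push_cast
    ring

lemma sum_sum_prod_mul_gaussMomentTensor {κ : Type*} [Fintype κ] (t : ℕ)
    (v : κ → EuclideanSpace ℝ ι) :
    ∑ α : Fin (2 * t) → ι, (∑ j, ∏ i, v j (α i)) * gaussMomentTensor α =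
      (∏ j ∈ range t, (2 * (j : ℝ) + 1)) * ∑ j, ‖v j‖ ^ (2 * t) := by
  simp only [sum_mul, mul_sum]
  rw [sum_comm]
  refine sum_congr rfl fun j _ => ?_
  simp only [mul_comm _ (gaussMomentTensor _)]
  rw [sum_gaussMomentTensor_mul_prod_two_mul, pow_mul, EuclideanSpace.real_norm_sq_eq]

end Welch

open Welch in
theorem generalized_welch_bound_general (t d n : ℕ)
    (v : Fin n → EuclideanSpace ℝ (Fin d)) :
    (∏ j ∈ Finset.range t, (2 * (j : ℝ) + 1) / ((d : ℝ) + 2 * j)) *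
        (∑ l, ‖v l‖ ^ (2 * t)) ^ 2 ≤
      ∑ j, ∑ k, (inner ℝ (v j) (v k) : ℝ) ^ (2 * t) := by
  have hcs := sum_mul_sq_le_sq_mul_sq univ
    (fun α : Fin (2 * t) → Fin d => ∑ j, ∏ i, v j (α i)) gaussMomentTensor
  rw [sum_sum_prod_mul_gaussMomentTensor, sum_sq_sum_prod_eq_sum_sum_inner_pow,
    sum_gaussMomentTensor_sq_two_mul, Fintype.card_fin, prod_mul_distrib] at hcs
  set P := ∏ j ∈ range t, (2 * (j : ℝ) + 1)
  set Q := ∏ j ∈ range t, ((d : ℝ) + 2 * j)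
  set L := ∑ j, ∑ k, inner ℝ (v j) (v k) ^ (2 * t)
  have hP : 0 < P := prod_pos fun j _ => by positivity
  have hQ : 0 ≤ Q := prod_nonneg fun j _ => by positivity
  have hL : 0 ≤ L := sum_nonneg fun j _ => sum_nonneg fun k _ => (even_two_mul t).pow_nonneg _
  rw [prod_div_distrib, div_mul_eq_mul_div]
  exact div_le_of_le_mul₀ hQ hL (le_of_mul_le_mul_left (by linarith) hP)

/-- The generalized Welch bound for real vectors: for any `v₁,…,vₙ ∈ ℝᵈ`,
`Σ_j Σ_k ⟨v_j,v_k⟩^{2t} ≥ c_t(ℝᵈ)·(Σ_ℓ ‖v_ℓ‖^{2t})²`, where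
`c_t(ℝᵈ) = Π_{j=0}^{t-1}(2j+1)/(d+2j)`. -/
theorem generalized_welch_bound (t d n : ℕ) (ht : 1 ≤ t) (hd : 1 ≤ d)
    (v : Fin n → EuclideanSpace ℝ (Fin d)) :
    (∏ j ∈ Finset.range t, (2 * (j : ℝ) + 1) / ((d : ℝ) + 2 * j)) *
        (∑ l, ‖v l‖ ^ (2 * t)) ^ 2 ≤
      ∑ j, ∑ k, (inner ℝ (v j) (v k) : ℝ) ^ (2 * t) :=
  generalized_welch_bound_general t d n v
end

section
/- Let t ≥ 1, d ≥ 1, and let v₁,…,vₙ be unit vectors in ℝ^d. Then (v_j) is a spherical (t,t)-design for ℝ^d, i.e. Σ_{j=1}^n Σ_{k=1}^n ⟨v_j,v_k⟩^{2t} = c_t(ℝ^d)·n² with c_t(ℝ^d) = ∏_{j=0}^{t-1} (2j+1)/(d+2j), if and only if the cubature rule ∫_{S^{d−1}} p dσ = (1/n)·Σ_{j=1}^{n} p(v_j) holds for every homogeneous polynomial p : ℝ^d → ℝ of degree 2t, where σ is the normalized surface measure on the unit sphere S^{d−1} of ℝ^d. -/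
/-!
Write `S = ∫ x^{⊗2t} dσ` and `W = Σ_j v_j^{⊗2t}` as vectors indexed by `f : Fin (2t) → Fin d`.
Isometry invariance makes `∫ ⟨x,u⟩^{2t} dσ` the same number `c` for every unit vector `u`
(a reflection moves `u` to a basis vector), and `c = c_t(ℝᵈ)`: the coordinate moments
`M_s = ∫ x_i^{2s} dσ` satisfy `(d + 2s) M_{s+1} = (2s+1) M_s`, by integrating
`x_i^{2s} Σ_j x_j² = x_i^{2s}` and comparing the `a²`-coefficients of
`∫ (x_i + a x_j)^{2s+2} dσ = (1 + a²)^{s+1} M_{s+1}`.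
Since `⟨x^{⊗2t}, y^{⊗2t}⟩ = ⟨x,y⟩^{2t}`, this gives `⟨W,S⟩ = nc` and `⟨S,S⟩ = c`, so
`‖W - nS‖² = Σ_{j,k} ⟨v_j,v_k⟩^{2t} - c n²`. The design condition is therefore `W = nS`, i.e.
the cubature rule for the monomials `x_{f 0} ⋯ x_{f (2t-1)}`, which span the homogeneous
polynomials of degree `2t`.
-/

open Finset MeasureTheory Metric

namespace MvPolynomial

variable {ι R : Type*} [CommSemiring R]

theorem monomial_one_eq_prod_map_X (α : ι →₀ ℕ) :
    monomial α (1 : R) = (α.toMultiset.map X).prod := by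
  classical
  rw [Finset.prod_multiset_map_count, Finsupp.toFinset_toMultiset, ← prod_X_pow_eq_monomial]
  simp only [Finsupp.count_toMultiset]

theorem exists_monomial_one_eq_prod_X {α : ι →₀ ℕ} {N : ℕ} (hα : α.degree = N) :
    ∃ f : Fin N → ι, monomial α (1 : R) = ∏ k, X (f k) := by
  obtain ⟨l, hl⟩ : ∃ l : List ι, (l : Multiset ι) = α.toMultiset :=
    ⟨_, Multiset.coe_toList _⟩
  have hlen : l.length = N := by
    rw [← hα, ← Multiset.coe_card, hl, Finsupp.card_toMultiset]; rfl
  refine ⟨fun k => l[Fin.cast hlen.symm k], ?_⟩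
  rw [monomial_one_eq_prod_map_X, ← hl, Multiset.map_coe, Multiset.prod_coe,
    Fin.prod_congr' (fun i : Fin l.length => X l[i]) hlen.symm]
  exact (Fin.prod_univ_fun_getElem l X).symm

theorem span_prod_X_eq_homogeneousSubmodule (N : ℕ) :
    Submodule.span R (Set.range fun f : Fin N → ι => ∏ k, (X (f k) : MvPolynomial ι R)) =
      homogeneousSubmodule ι R N := by
  apply le_antisymm
  · rw [Submodule.span_le]
    rintro _ ⟨f, rfl⟩
    simpa using IsHomogeneous.prod univ (fun k => X (f k)) (fun _ => 1)
      (fun k _ => isHomogeneous_X R (f k))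
  · intro p hp
    rw [p.as_sum]
    refine Submodule.sum_mem _ fun α hα => ?_
    have hdeg : α.degree = N := by
      by_contra h
      exact mem_support_iff.mp hα (IsHomogeneous.coeff_eq_zero hp h)
    obtain ⟨f, hf⟩ := exists_monomial_one_eq_prod_X (R := R) hdeg
    rw [← mul_one (coeff α p), ← smul_eq_mul, ← smul_monomial, hf]
    exact Submodule.smul_mem _ _ (Submodule.subset_span ⟨f, rfl⟩)

theorem eqOn_homogeneousSubmodule_iff {M : Type*} [AddCommMonoid M] [Module R M] {N : ℕ}
    (L₁ L₂ : MvPolynomial ι R →ₗ[R] M) :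
    (∀ p ∈ homogeneousSubmodule ι R N, L₁ p = L₂ p) ↔
      ∀ f : Fin N → ι, L₁ (∏ k, X (f k)) = L₂ (∏ k, X (f k)) := by
  rw [← span_prod_X_eq_homogeneousSubmodule]
  exact LinearMap.eqOn_span_iff.trans Set.forall_mem_range

end MvPolynomial

theorem Continuous.integrable_of_compactSpace {X : Type*} [TopologicalSpace X]
    [CompactSpace X] [MeasurableSpace X] [OpensMeasurableSpace X] {μ : Measure X}
    [IsFiniteMeasure μ] {f : X → ℝ} (hf : Continuous f) : Integrable f μ :=
  hf.integrable_of_hasCompactSupport (.of_compactSpace _)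

theorem sum_mul_self_eq_iff_of_sum_mul {F : Type*} [Fintype F] {W S : F → ℝ} {r c : ℝ}
    (hWS : ∑ f, W f * S f = r * c) (hSS : ∑ f, S f * S f = c) :
    ∑ f, W f * W f = c * r ^ 2 ↔ ∀ f, W f = r * S f := by
  have hsq : ∑ f, (W f - r * S f) ^ 2 = ∑ f, W f * W f - c * r ^ 2 := by
    calc ∑ f, (W f - r * S f) ^ 2
        = ∑ f, W f * W f - 2 * r * ∑ f, W f * S f + r ^ 2 * ∑ f, S f * S f := by
          rw [mul_sum, mul_sum, ← sum_sub_distrib, ← sum_add_distrib]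
          exact sum_congr rfl fun f _ => by ring
      _ = _ := by rw [hWS, hSS]; ring
  rw [← sub_eq_zero, ← hsq, sum_eq_zero_iff_of_nonneg fun f _ => sq_nonneg _]
  simp [sub_eq_zero]

open Polynomial in
theorem coeff_two_eq_of_sum_range_eq_mul_one_add_sq_pow {c : ℕ → ℝ} {N m : ℕ} {M : ℝ}
    (hN : 2 ≤ N) (h : ∀ a : ℝ, ∑ k ∈ range (N + 1), c k * a ^ k = M * (1 + a ^ 2) ^ m) :
    c 2 = M * m := by
  have hP : ∑ k ∈ range (N + 1), C (c k) * X ^ k = C M * (1 + X ^ 2) ^ m :=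
    Polynomial.funext fun a => by simp [eval_finsetSum, h a]
  have hexpand : (1 + X ^ 2 : ℝ[X]) ^ m = expand ℝ 2 ((1 + X) ^ m) := by simp
  have h2 := congrArg (coeff · 2) hP
  simp only [finsetSum_coeff, coeff_C_mul, coeff_X_pow, mul_ite, mul_one, mul_zero,
    Finset.sum_ite_eq, mem_range, hexpand] at h2
  rw [if_pos (by omega)] at h2
  have hcoeff := coeff_expand_mul two_pos ((1 + X : ℝ[X]) ^ m) 1
  rw [one_mul] at hcoeff
  rw [h2, hcoeff, coeff_one_add_X_pow, Nat.choose_one_right]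

section Invariance

variable {E : Type*} [NormedAddCommGroup E] [InnerProductSpace ℝ E] [MeasurableSpace E]

def IsIsometryInvariant (σ : Measure (sphere (0 : E) 1)) : Prop :=
  ∀ (e : E ≃ₗᵢ[ℝ] E) (f : E → ℝ), ∫ x, f (e ↑x) ∂σ = ∫ x, f ↑x ∂σ

variable {σ : Measure (sphere (0 : E) 1)}

theorem IsIsometryInvariant.integral_comp_inner_eq (hσ : IsIsometryInvariant σ) {u w : E}
    (h : ‖u‖ = ‖w‖) (g : ℝ → ℝ) :
    ∫ x, g (inner ℝ (x : E) u) ∂σ = ∫ x, g (inner ℝ (x : E) w) ∂σ := by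
  let e := (ℝ ∙ (u - w))ᗮ.reflection
  have he : e u = w := Submodule.reflection_sub h
  rw [← hσ e fun y => g (inner ℝ y w)]
  simp_rw [← he, LinearIsometryEquiv.inner_map_map]

theorem IsIsometryInvariant.integral_inner_pow (hσ : IsIsometryInvariant σ) (u : E) {w : E}
    (hw : ‖w‖ = 1) (k : ℕ) :
    ∫ x, inner ℝ (x : E) u ^ k ∂σ = ‖u‖ ^ k * ∫ x, inner ℝ (x : E) w ^ k ∂σ := by
  have hu : ‖u‖ = ‖‖u‖ • w‖ := by rw [norm_smul, hw, norm_norm, mul_one]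
  rw [hσ.integral_comp_inner_eq hu (· ^ k), ← integral_const_mul]
  simp_rw [inner_smul_right, mul_pow]

end Invariance

namespace EuclideanSpace

variable {ι : Type*} [Fintype ι]

theorem sum_sq_eq_one_of_mem_sphere (x : sphere (0 : EuclideanSpace ℝ ι) 1) :
    ∑ i, x.1 i ^ 2 = 1 := by
  rw [← real_norm_sq_eq, norm_eq_of_mem_sphere, one_pow]

theorem norm_single_add_smul_single_sq [DecidableEq ι] {i j : ι} (hij : i ≠ j) (a : ℝ) :
    ‖single i (1 : ℝ) + a • single j 1‖ ^ 2 = 1 + a ^ 2 := by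
  rw [norm_add_sq_real, norm_smul, inner_smul_right, inner_single_left]
  simp [hij]

theorem inner_pow_eq_sum_prod (x y : EuclideanSpace ℝ ι) (m : ℕ) :
    inner ℝ x y ^ m = ∑ f : Fin m → ι, (∏ k, x (f k)) * ∏ k, y (f k) := by
  classical
  rw [PiLp.inner_apply, ← Fin.prod_const, Fintype.prod_sum]
  simp [prod_mul_distrib, mul_comm]

end EuclideanSpace

section Moments

open EuclideanSpace

variable {ι : Type*} [Fintype ι] {σ : Measure (sphere (0 : EuclideanSpace ℝ ι) 1)}

theorem IsIsometryInvariant.integral_coord_add_mul_coord_pow (hσ : IsIsometryInvariant σ)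
    {i j : ι} (hij : i ≠ j) (a : ℝ) (m : ℕ) :
    ∫ x, (x.1 i + a * x.1 j) ^ (2 * m) ∂σ = (1 + a ^ 2) ^ m * ∫ x, x.1 i ^ (2 * m) ∂σ := by
  classical
  have hinner : ∀ x : EuclideanSpace ℝ ι,
      inner ℝ x (single i 1 + a • single j 1) = x i + a * x j := by
    simp only [inner_add_right, inner_smul_right, inner_single_right]
    simp
  simp_rw [← hinner]
  rw [hσ.integral_inner_pow _ (by simp : ‖single i (1 : ℝ)‖ = 1), pow_mul,
    norm_single_add_smul_single_sq hij]
  simp [inner_single_right]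

theorem IsIsometryInvariant.mul_integral_coord_pow_mul_sq [IsFiniteMeasure σ]
    (hσ : IsIsometryInvariant σ) {i j : ι} (hij : i ≠ j) (m : ℕ) :
    (2 * m + 1) * ∫ x, x.1 i ^ (2 * m) * x.1 j ^ 2 ∂σ = ∫ x, x.1 i ^ (2 * (m + 1)) ∂σ := by
  classical
  have hexpand : ∀ a : ℝ, ∑ k ∈ range (2 * (m + 1) + 1),
      (2 * (m + 1)).choose k * (∫ x, x.1 i ^ (2 * (m + 1) - k) * x.1 j ^ k ∂σ) * a ^ k =
        (∫ x, x.1 i ^ (2 * (m + 1)) ∂σ) * (1 + a ^ 2) ^ (m + 1) := by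
    intro a
    calc _ = ∫ x, ∑ k ∈ range (2 * (m + 1) + 1), (2 * (m + 1)).choose k * a ^ k *
          (x.1 i ^ (2 * (m + 1) - k) * x.1 j ^ k) ∂σ := by
          rw [integral_finsetSum _ fun k _ =>
            (by fun_prop : Continuous _).integrable_of_compactSpace]
          exact sum_congr rfl fun k _ => by rw [integral_const_mul]; ring
      _ = ∫ x, (x.1 i + a * x.1 j) ^ (2 * (m + 1)) ∂σ :=
          integral_congr_ae (.of_forall fun x => by
            dsimp only
            rw [add_comm (x.1 i), add_pow]
            exact sum_congr rfl fun k _ => by ring)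
      _ = _ := by rw [hσ.integral_coord_add_mul_coord_pow hij, mul_comm]
  have h2 := coeff_two_eq_of_sum_range_eq_mul_one_add_sq_pow (by omega) hexpand
  rw [Nat.cast_choose_two, show 2 * (m + 1) - 2 = 2 * m by omega] at h2
  apply mul_left_cancel₀ (show (m + 1 : ℝ) ≠ 0 by positivity)
  push_cast at h2
  linear_combination h2

theorem IsIsometryInvariant.mul_integral_coord_pow_succ [IsFiniteMeasure σ]
    (hσ : IsIsometryInvariant σ) (i : ι) (s : ℕ) :
    (Fintype.card ι + 2 * s) * ∫ x, x.1 i ^ (2 * (s + 1)) ∂σ =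
      (2 * s + 1) * ∫ x, x.1 i ^ (2 * s) ∂σ := by
  classical
  have hsphere : ∫ x, x.1 i ^ (2 * s) ∂σ = ∑ j, ∫ x, x.1 i ^ (2 * s) * x.1 j ^ 2 ∂σ := by
    rw [← integral_finsetSum _ fun j _ =>
      (by fun_prop : Continuous _).integrable_of_compactSpace]
    simp_rw [← mul_sum, sum_sq_eq_one_of_mem_sphere, mul_one]
  have hdiag : ∫ x, x.1 i ^ (2 * s) * x.1 i ^ 2 ∂σ = ∫ x, x.1 i ^ (2 * (s + 1)) ∂σ := by
    simp_rw [← pow_add, mul_add]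
  have hoff : ∀ j ∈ univ.erase i,
      (2 * s + 1) * ∫ x, x.1 i ^ (2 * s) * x.1 j ^ 2 ∂σ = ∫ x, x.1 i ^ (2 * (s + 1)) ∂σ :=
    fun j hj => hσ.mul_integral_coord_pow_mul_sq (ne_of_mem_erase hj).symm s
  have hcard : ((univ.erase i).card : ℝ) = Fintype.card ι - 1 := by
    rw [card_erase_of_mem (mem_univ i), card_univ, Nat.cast_sub (Fintype.card_pos_iff.mpr ⟨i⟩),
      Nat.cast_one]
  have hsum : (2 * s + 1) * ∑ j ∈ univ.erase i, ∫ x, x.1 i ^ (2 * s) * x.1 j ^ 2 ∂σ =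
      (Fintype.card ι - 1) * ∫ x, x.1 i ^ (2 * (s + 1)) ∂σ := by
    rw [mul_sum, sum_congr rfl hoff, sum_const, nsmul_eq_mul, hcard]
  rw [hsphere, ← add_sum_erase _ _ (mem_univ i), hdiag]
  linear_combination -hsum

theorem IsIsometryInvariant.integral_coord_pow [IsProbabilityMeasure σ]
    (hσ : IsIsometryInvariant σ) (i : ι) (t : ℕ) :
    ∫ x, x.1 i ^ (2 * t) ∂σ = ∏ s ∈ range t, (2 * (s : ℝ) + 1) / (Fintype.card ι + 2 * s) := by
  induction t with
  | zero => simp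
  | succ s ih =>
    have hpos : (0 : ℝ) < Fintype.card ι + 2 * s := by
      have : 0 < Fintype.card ι := Fintype.card_pos_iff.mpr ⟨i⟩
      positivity
    rw [prod_range_succ, ← ih, ← mul_div_assoc, eq_div_iff hpos.ne', mul_comm,
      hσ.mul_integral_coord_pow_succ i s, mul_comm]

theorem IsIsometryInvariant.integral_inner_pow_of_norm_eq_one [IsProbabilityMeasure σ]
    (hσ : IsIsometryInvariant σ) {u : EuclideanSpace ℝ ι} (hu : ‖u‖ = 1) (t : ℕ) :
    ∫ x, inner ℝ x.1 u ^ (2 * t) ∂σ =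
      ∏ s ∈ range t, (2 * (s : ℝ) + 1) / (Fintype.card ι + 2 * s) := by
  classical
  obtain ⟨i⟩ : Nonempty ι := by
    by_contra h
    rw [not_nonempty_iff] at h
    simp [Subsingleton.elim u 0] at hu
  rw [hσ.integral_inner_pow u (by simp : ‖single i (1 : ℝ)‖ = 1), hu, one_pow, one_mul,
    ← hσ.integral_coord_pow i t]
  simp [inner_single_right]

end Moments

namespace SphericalDesign

open EuclideanSpace

variable {ι : Type*} [Fintype ι] {σ : Measure (sphere (0 : EuclideanSpace ℝ ι) 1)}

theorem sum_prod_mul_integral_prod [IsFiniteMeasure σ] (y : EuclideanSpace ℝ ι) (m : ℕ) :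
    ∑ f : Fin m → ι, (∏ k, y (f k)) * ∫ x, ∏ k, x.1 (f k) ∂σ =
      ∫ x, inner ℝ x.1 y ^ m ∂σ := by
  simp_rw [← integral_const_mul]
  rw [← integral_finsetSum _ fun f _ => (by fun_prop : Continuous _).integrable_of_compactSpace]
  simp_rw [inner_pow_eq_sum_prod, mul_comm]

theorem sum_inner_pow_eq_iff [IsProbabilityMeasure σ] {m n : ℕ} {c : ℝ}
    (hc : ∀ u : EuclideanSpace ℝ ι, ‖u‖ = 1 → ∫ x, inner ℝ x.1 u ^ m ∂σ = c)
    (v : Fin n → EuclideanSpace ℝ ι) (hv : ∀ j, ‖v j‖ = 1) :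
    ∑ j, ∑ k, inner ℝ (v j) (v k) ^ m = c * n ^ 2 ↔
      ∀ f : Fin m → ι, ∑ j, ∏ k, v j (f k) = n * ∫ x, ∏ k, x.1 (f k) ∂σ := by
  set S : (Fin m → ι) → ℝ := fun f => ∫ x, ∏ k, x.1 (f k) ∂σ
  set W : (Fin m → ι) → ℝ := fun f => ∑ j, ∏ k, v j (f k)
  have hWW : ∑ j, ∑ k, inner ℝ (v j) (v k) ^ m = ∑ f, W f * W f := by
    simp only [W, sum_mul_sum, inner_pow_eq_sum_prod]
    exact (sum_congr rfl fun j _ => sum_comm).trans sum_comm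
  have hWS : ∑ f, W f * S f = n * c := by
    simp only [W, sum_mul]
    rw [sum_comm]
    simp only [S, sum_prod_mul_integral_prod, hc _ (hv _), sum_const, card_univ,
      Fintype.card_fin, nsmul_eq_mul]
  have hSS : ∑ f, S f * S f = c := by
    calc ∑ f, S f * S f = ∫ x, ∑ f, (∏ k, x.1 (f k)) * S f ∂σ := by
          rw [integral_finsetSum _ fun f _ =>
            (by fun_prop : Continuous _).integrable_of_compactSpace]
          exact sum_congr rfl fun f _ => (integral_mul_const _ _).symm
      _ = c := by
          simp only [S, sum_prod_mul_integral_prod, hc _ (norm_eq_of_mem_sphere _)]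
          simp
  rw [hWW]
  exact sum_mul_self_eq_iff_of_sum_mul hWS hSS

noncomputable def integralEval (σ : Measure (sphere (0 : EuclideanSpace ℝ ι) 1))
    [IsFiniteMeasure σ] : MvPolynomial ι ℝ →ₗ[ℝ] ℝ where
  toFun p := ∫ x, MvPolynomial.eval (fun i => x.1 i) p ∂σ
  map_add' p q := by
    simp only [map_add]
    exact integral_add
      ((MvPolynomial.continuous_eval p).comp (by fun_prop)).integrable_of_compactSpace
      ((MvPolynomial.continuous_eval q).comp (by fun_prop)).integrable_of_compactSpace
  map_smul' a p := by
    simp only [MvPolynomial.smul_eval, RingHom.id_apply, smul_eq_mul]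
    exact integral_const_mul a _

noncomputable def sampleMeanEval {n : ℕ} (v : Fin n → EuclideanSpace ℝ ι) :
    MvPolynomial ι ℝ →ₗ[ℝ] ℝ :=
  (1 / n : ℝ) • ∑ j, (MvPolynomial.aeval fun i => v j i).toLinearMap

theorem cubature_iff_forall_prod [IsFiniteMeasure σ] {n : ℕ} (v : Fin n → EuclideanSpace ℝ ι)
    (N : ℕ) :
    (∀ p ∈ MvPolynomial.homogeneousSubmodule ι ℝ N,
      ∫ x, MvPolynomial.eval (fun i => x.1 i) p ∂σ =
        (1 / n : ℝ) * ∑ j, MvPolynomial.eval (fun i => v j i) p) ↔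
      ∀ f : Fin N → ι,
        ∫ x, ∏ k, x.1 (f k) ∂σ = (1 / n : ℝ) * ∑ j, ∏ k, v j (f k) := by
  simpa [integralEval, sampleMeanEval] using
    MvPolynomial.eqOn_homogeneousSubmodule_iff (integralEval σ) (sampleMeanEval v)

end SphericalDesign

theorem design_iff_cubature_general (t d n : ℕ) (hn : 0 < n)
    (σ : Measure (Metric.sphere (0 : EuclideanSpace ℝ (Fin d)) 1))
    [IsProbabilityMeasure σ]
    (hinv : ∀ (e : EuclideanSpace ℝ (Fin d) ≃ₗᵢ[ℝ] EuclideanSpace ℝ (Fin d))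
      (f : EuclideanSpace ℝ (Fin d) → ℝ),
      ∫ x, f (e ↑x) ∂σ = ∫ x, f ↑x ∂σ)
    (v : Fin n → EuclideanSpace ℝ (Fin d)) (hv : ∀ j, ‖v j‖ = 1) :
    (∑ j, ∑ k, (inner ℝ (v j) (v k) : ℝ) ^ (2 * t) =
        (∏ j ∈ Finset.range t, (2 * (j : ℝ) + 1) / ((d : ℝ) + 2 * j)) * (n : ℝ) ^ 2) ↔
    (∀ p ∈ MvPolynomial.homogeneousSubmodule (Fin d) ℝ (2 * t),
      ∫ x, MvPolynomial.eval (fun i => (x : EuclideanSpace ℝ (Fin d)) i) p ∂σ =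
        (1 / (n : ℝ)) * ∑ j, MvPolynomial.eval (fun i => v j i) p) := by
  have hσ : IsIsometryInvariant σ := hinv
  have hc : ∀ u : EuclideanSpace ℝ (Fin d), ‖u‖ = 1 →
      ∫ x, inner ℝ (x : EuclideanSpace ℝ (Fin d)) u ^ (2 * t) ∂σ =
        ∏ j ∈ Finset.range t, (2 * (j : ℝ) + 1) / ((d : ℝ) + 2 * j) := fun u hu => by
    rw [hσ.integral_inner_pow_of_norm_eq_one hu, Fintype.card_fin]
  rw [SphericalDesign.sum_inner_pow_eq_iff hc v hv, SphericalDesign.cubature_iff_forall_prod]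
  have hn' : (n : ℝ) ≠ 0 := by positivity
  refine forall_congr' fun f => ?_
  rw [one_div_mul_eq_div, eq_div_iff hn', eq_comm, mul_comm]

/-- Unit vectors `v₁,…,vₙ ∈ ℝᵈ` form a spherical `(t,t)`-design
(`Σ_j Σ_k ⟨v_j,v_k⟩^{2t} = c_t(ℝᵈ)·n²`) if and only if the cubature rule
`∫_{S^{d−1}} p dσ = (1/n)·Σ_j p(v_j)` holds for every homogeneous polynomial `p` of
degree `2t`, where `σ` is the normalized (rotation-invariant) surface probability
measure on the unit sphere of `ℝᵈ`. -/
theorem design_iff_cubature (t d n : ℕ) (ht : 1 ≤ t) (hd : 1 ≤ d) (hn : 0 < n)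
    (σ : Measure (Metric.sphere (0 : EuclideanSpace ℝ (Fin d)) 1))
    [IsProbabilityMeasure σ]
    (hinv : ∀ (e : EuclideanSpace ℝ (Fin d) ≃ₗᵢ[ℝ] EuclideanSpace ℝ (Fin d))
      (f : EuclideanSpace ℝ (Fin d) → ℝ),
      ∫ x, f (e ↑x) ∂σ = ∫ x, f ↑x ∂σ)
    (v : Fin n → EuclideanSpace ℝ (Fin d)) (hv : ∀ j, ‖v j‖ = 1) :
    (∑ j, ∑ k, (inner ℝ (v j) (v k) : ℝ) ^ (2 * t) =
        (∏ j ∈ Finset.range t, (2 * (j : ℝ) + 1) / ((d : ℝ) + 2 * j)) * (n : ℝ) ^ 2) ↔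
    (∀ p ∈ MvPolynomial.homogeneousSubmodule (Fin d) ℝ (2 * t),
      ∫ x, MvPolynomial.eval (fun i => (x : EuclideanSpace ℝ (Fin d)) i) p ∂σ =
        (1 / (n : ℝ)) * ∑ j, MvPolynomial.eval (fun i => v j i) p) :=
  design_iff_cubature_general t d n hn σ hinv v hv
end
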